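/- arXiv:2211.09975 — 6 statements merged into one kernel-verified Lean document; each statement's English description precedes it below -/
import Mathlib

section
/- Let x > 1 and let A₁, A₂, A₃, b₁, b₂ be positive reals and u, v, λ real numbers with 0 < u < v < 1 < λ. Assume that for all M ∈ [x^u, x^v] the estimate |S(M)| ≤ A₁·M^{b₁} + A₂·M^{-b₂} + A₃ holds. Then |S(x^u, x^v)| ≤ A₁′·x^{b₁·v} + A₂′·x^{-b₂·u} + A₃′·log x + A₃, where A₁′ = A₁/(1 − λ^{-b₁}), A₂′ = A₂/(1 − λ^{-b₂}), and A₃′ = A₃·(v − u)/log λ. -/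
/-! The interval `(x^u, x^v]` is covered by the `⌊t⌋ + 1` intervals `(λ^k x^u, λ^(k+1) x^u]`,
where `t = (v - u) log x / log λ` is the exponent with `λ^t x^u = x^v`. Summing the hypothesis
over these intervals, the terms `A₁ M^{b₁}` and `A₂ M^{-b₂}` form geometric progressions, so each
sum is at most `1 / (1 - λ^{-b})` times its largest term (the last, resp. the first one), while
the constant `A₃` contributes at most `(t + 1) A₃`. -/

/-- `Sset x h M N` is the set `S(M,N)` of odd integers `u` with `M < u ≤ N` such that
`1 − h/u² ≤ {x/u²} < 1`, where `{θ}` denotes the fractional part. -/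
def Sset (x h M N : ℝ) : Set ℤ :=
  {u : ℤ | Odd u ∧ M < (u : ℝ) ∧ (u : ℝ) ≤ N ∧
    1 - h / (u : ℝ) ^ 2 ≤ Int.fract (x / (u : ℝ) ^ 2) ∧ Int.fract (x / (u : ℝ) ^ 2) < 1}

open Finset Real

lemma Sset_finite (x h M N : ℝ) : (Sset x h M N).Finite := by
  refine (Set.finite_Icc ⌈M⌉ ⌊N⌋).subset ?_
  rintro n ⟨-, hMn, hnN, -⟩
  exact ⟨Int.ceil_le.mpr hMn.le, Int.le_floor.mpr hnN⟩

lemma Nat.exists_lt_and_le_succ {α : Type*} [LinearOrder α] {f : ℕ → α} {a : α} {K : ℕ}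
    (h0 : f 0 < a) (hK : a ≤ f K) : ∃ k < K, f k < a ∧ a ≤ f (k + 1) := by
  classical
  cases K with
  | zero => exact absurd (h0.trans_le hK) (lt_irrefl _)
  | succ j =>
    have hex : ∃ k, a ≤ f (k + 1) := ⟨j, hK⟩
    refine ⟨Nat.find hex, Nat.lt_succ_of_le (Nat.find_min' hex hK), ?_, Nat.find_spec hex⟩
    cases hk : Nat.find hex with
    | zero => exact h0
    | succ i => exact not_le.1 (Nat.find_min hex (by omega : i < Nat.find hex))

lemma Sset_subset_biUnion (x h Y : ℝ) (f : ℕ → ℝ) {K : ℕ} (hK : Y ≤ f K) :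
    Sset x h (f 0) Y ⊆ ⋃ k ∈ range K, Sset x h (f k) (f (k + 1)) := by
  rintro n ⟨hodd, h0, hY, hfract⟩
  obtain ⟨k, hk, hlt, hle⟩ := Nat.exists_lt_and_le_succ h0 (hY.trans hK)
  exact Set.mem_biUnion (mem_range.2 hk) ⟨hodd, hlt, hle, hfract⟩

lemma ncard_Sset_le_sum_pow_mul (x h X Y lam : ℝ) {K : ℕ} (hK : Y ≤ lam ^ K * X) :
    (Sset x h X Y).ncard ≤
      ∑ k ∈ range K, (Sset x h (lam ^ k * X) (lam * (lam ^ k * X))).ncard := by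
  have hsub := Sset_subset_biUnion x h Y (fun k => lam ^ k * X) hK
  simp only [pow_zero, one_mul, pow_succ', mul_assoc] at hsub
  exact (Set.ncard_le_ncard hsub
    ((range K).finite_toSet.biUnion fun _ _ => Sset_finite _ _ _ _)).trans
    ((range K).set_ncard_biUnion_le _)

lemma pow_mul_rpow_le_rpow_iff {lam x : ℝ} (hlam : 1 < lam) (hx : 0 < x) (k : ℕ) (u v : ℝ) :
    lam ^ k * x ^ u ≤ x ^ v ↔ (k : ℝ) ≤ (v - u) * log x / log lam := by
  rw [← log_le_log_iff (by positivity) (by positivity), log_mul (by positivity) (by positivity),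
    log_pow, log_rpow hx, log_rpow hx, le_div_iff₀ (log_pos hlam)]
  constructor <;> intro <;> linarith

lemma geom_sum_range_succ_le_of_one_lt {r : ℝ} (hr : 1 < r) (n : ℕ) :
    ∑ k ∈ range (n + 1), r ^ k ≤ r ^ n / (1 - r⁻¹) := by
  have hr0 : 0 < r - 1 := sub_pos.2 hr
  calc ∑ k ∈ range (n + 1), r ^ k = (r ^ (n + 1) - 1) / (r - 1) := geom_sum_eq hr.ne' _
    _ ≤ r ^ (n + 1) / (r - 1) := by gcongr; linarith
    _ = r ^ n / (1 - r⁻¹) := by field_simp; ring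

lemma pow_mul_rpow {lam X : ℝ} (hlam : 0 ≤ lam) (hX : 0 ≤ X) (k : ℕ) (b : ℝ) :
    (lam ^ k * X) ^ b = (lam ^ b) ^ k * X ^ b := by
  rw [mul_rpow (by positivity) hX, rpow_pow_comm hlam]

lemma sum_pow_mul_rpow_le {lam X b : ℝ} (hlam : 1 < lam) (hX : 0 ≤ X) (hb : 0 < b) (n : ℕ) :
    ∑ k ∈ range (n + 1), (lam ^ k * X) ^ b ≤ (lam ^ n * X) ^ b / (1 - lam ^ (-b)) := by
  have hr : 1 < lam ^ b := one_lt_rpow hlam hb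
  simp_rw [pow_mul_rpow (zero_le_one.trans hlam.le) hX, ← sum_mul,
    rpow_neg (zero_le_one.trans hlam.le), mul_div_right_comm]
  gcongr
  exact geom_sum_range_succ_le_of_one_lt hr n

lemma sum_pow_mul_rpow_neg_le {lam X b : ℝ} (hlam : 1 < lam) (hX : 0 ≤ X) (hb : 0 < b)
    (n : ℕ) :
    ∑ k ∈ range n, (lam ^ k * X) ^ (-b) ≤ X ^ (-b) / (1 - lam ^ (-b)) := by
  have hq : lam ^ (-b) < 1 := rpow_lt_one_of_one_lt_of_neg hlam (neg_neg_of_pos hb)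
  simp_rw [pow_mul_rpow (zero_le_one.trans hlam.le) hX, ← sum_mul, mul_comm _ (X ^ (-b))]
  rw [div_eq_mul_one_div]
  gcongr
  have := geom_sum_Ico_le_of_lt_one (m := 0) (n := n) (by positivity) hq
  rwa [← range_eq_Ico, pow_zero] at this

theorem card_Sset_of_card_Sset_ratio_general (x h lam A₁ A₂ A₃ b₁ b₂ u v : ℝ)
    (hx : 1 < x)
    (hA₁ : 0 < A₁) (hA₂ : 0 < A₂) (hA₃ : 0 < A₃) (hb₁ : 0 < b₁) (hb₂ : 0 < b₂)
    (huv : u < v) (hlam : 1 < lam)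
    (hS : ∀ M : ℝ, x ^ u ≤ M → M ≤ x ^ v →
      ((Sset x h M (lam * M)).ncard : ℝ) ≤ A₁ * M ^ b₁ + A₂ * M ^ (-b₂) + A₃) :
    ((Sset x h (x ^ u) (x ^ v)).ncard : ℝ) ≤
      A₁ / (1 - lam ^ (-b₁)) * x ^ (b₁ * v) + A₂ / (1 - lam ^ (-b₂)) * x ^ (-b₂ * u) +
        A₃ * (v - u) / Real.log lam * Real.log x + A₃ := by
  have hx0 : 0 < x := by linarith
  set t := (v - u) * log x / log lam
  have ht : 0 ≤ t := div_nonneg (mul_nonneg (sub_nonneg.2 huv.le) (log_nonneg hx.le))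
    (log_nonneg hlam.le)
  set n := ⌊t⌋₊
  have hle_iff (k : ℕ) : k ≤ n ↔ lam ^ k * x ^ u ≤ x ^ v :=
    (Nat.le_floor_iff ht).trans (pow_mul_rpow_le_rpow_iff hlam hx0 k u v).symm
  have hcover : x ^ v ≤ lam ^ (n + 1) * x ^ u :=
    (not_le.1 fun h => by simpa using (hle_iff (n + 1)).2 h).le
  calc ((Sset x h (x ^ u) (x ^ v)).ncard : ℝ)
      ≤ ∑ k ∈ range (n + 1),
          ((Sset x h (lam ^ k * x ^ u) (lam * (lam ^ k * x ^ u))).ncard : ℝ) :=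
        mod_cast ncard_Sset_le_sum_pow_mul x h (x ^ u) (x ^ v) lam hcover
    _ ≤ ∑ k ∈ range (n + 1),
          (A₁ * (lam ^ k * x ^ u) ^ b₁ + A₂ * (lam ^ k * x ^ u) ^ (-b₂) + A₃) :=
        sum_le_sum fun k hk => hS _ (le_mul_of_one_le_left (by positivity) (one_le_pow₀ hlam.le))
          ((hle_iff k).1 (Nat.lt_succ_iff.1 (mem_range.1 hk)))
    _ = A₁ * ∑ k ∈ range (n + 1), (lam ^ k * x ^ u) ^ b₁ +
          A₂ * ∑ k ∈ range (n + 1), (lam ^ k * x ^ u) ^ (-b₂) + (n + 1) * A₃ := by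
        simp [sum_add_distrib, mul_sum]
    _ ≤ A₁ * ((x ^ v) ^ b₁ / (1 - lam ^ (-b₁))) +
          A₂ * ((x ^ u) ^ (-b₂) / (1 - lam ^ (-b₂))) + (t + 1) * A₃ := by
        have : 0 ≤ 1 - lam ^ (-b₁) :=
          sub_nonneg.2 (rpow_le_one_of_one_le_of_nonpos hlam.le (neg_nonpos.2 hb₁.le))
        gcongr
        · exact (sum_pow_mul_rpow_le hlam (by positivity) hb₁ n).trans (by
            gcongr; exact (hle_iff n).1 le_rfl)
        · exact sum_pow_mul_rpow_neg_le hlam (by positivity) hb₂ _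
        · exact Nat.floor_le ht
    _ = _ := by
        rw [← rpow_mul hx0.le, ← rpow_mul hx0.le, mul_comm v, mul_comm u]
        ring

/-- Lemma 1: covering `(x^u, x^v]` by dyadic-type intervals `(M, λM]`. -/
theorem card_Sset_of_card_Sset_ratio (x h lam A₁ A₂ A₃ b₁ b₂ u v : ℝ)
    (hx : 1 < x) (hh : 0 < h)
    (hA₁ : 0 < A₁) (hA₂ : 0 < A₂) (hA₃ : 0 < A₃) (hb₁ : 0 < b₁) (hb₂ : 0 < b₂)
    (hu : 0 < u) (huv : u < v) (hv : v < 1) (hlam : 1 < lam)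
    (hS : ∀ M : ℝ, x ^ u ≤ M → M ≤ x ^ v →
      ((Sset x h M (lam * M)).ncard : ℝ) ≤ A₁ * M ^ b₁ + A₂ * M ^ (-b₂) + A₃) :
    ((Sset x h (x ^ u) (x ^ v)).ncard : ℝ) ≤
      A₁ / (1 - lam ^ (-b₁)) * x ^ (b₁ * v) + A₂ / (1 - lam ^ (-b₂)) * x ^ (-b₂ * u) +
        A₃ * (v - u) / Real.log lam * Real.log x + A₃ :=
  card_Sset_of_card_Sset_ratio_general x h lam A₁ A₂ A₃ b₁ b₂ u v hx hA₁ hA₂ hA₃ hb₁ hb₂ huv hlam hS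
end

section
/- Let x ≥ e^{41}, 1000 ≤ h ≤ 2·x^{1/3}, let λ ∈ (1, 2], and let H, M be reals with h ≤ H ≤ M ≤ √(2x) and H ≥ 1000. If u and u + a (with a a positive integer) are two distinct elements of S(M), then a > 0.4995·x^{-1}·M³. -/
theorem sub_lt_of_one_sub_le_fract {p q δ : ℝ} (hp : 1 - δ ≤ Int.fract p)
    (hq : 1 - δ ≤ Int.fract q) (hqp : q < p) (hpq : p < q + (1 - δ)) : p - q < δ := by
  have hp' := Int.floor_add_fract p
  have hq' := Int.floor_add_fract q
  have hlt : ⌊p⌋ - ⌊q⌋ < 1 := by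
    have : ((⌊p⌋ - ⌊q⌋ : ℤ) : ℝ) < 1 := by push_cast; linarith [Int.fract_lt_one q]
    exact_mod_cast this
  have hgt : -1 < ⌊p⌋ - ⌊q⌋ := by
    have : (-1 : ℝ) < ((⌊p⌋ - ⌊q⌋ : ℤ) : ℝ) := by push_cast; linarith [Int.fract_lt_one p]
    exact_mod_cast this
  have hfloor : ⌊p⌋ = ⌊q⌋ := by omega
  have : p - q = Int.fract p - Int.fract q := by rw [Int.fract, Int.fract, hfloor]; ring
  linarith [Int.fract_lt_one p]

section DivSq

variable {x M u v : ℝ}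

theorem div_sq_sub_div_sq (hu : u ≠ 0) (hv : v ≠ 0) :
    x / u ^ 2 - x / v ^ 2 = x * (v - u) * (u + v) / (u ^ 2 * v ^ 2) := by
  field_simp
  ring

theorem cube_mul_div_sq_sub_div_sq_lt (hx : 0 < x) (hM : 0 < M) (hMu : M ≤ u) (huv : u < v) :
    M ^ 3 * (x / u ^ 2 - x / v ^ 2) < 2 * x * (v - u) := by
  have hu : 0 < u := hM.trans_le hMu
  have hv : 0 < v := hu.trans huv
  rw [div_sq_sub_div_sq hu.ne' hv.ne', mul_div_assoc', div_lt_iff₀ (by positivity)]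
  have hM3 : M ^ 3 ≤ u ^ 2 * v := by
    calc M ^ 3 = M ^ 2 * M := by ring
      _ ≤ u ^ 2 * v := by gcongr; linarith
  have hxvu : 0 < x * (v - u) := mul_pos hx (by linarith)
  calc M ^ 3 * (x * (v - u) * (u + v)) = x * (v - u) * (M ^ 3 * (u + v)) := by ring
    _ ≤ x * (v - u) * (u ^ 2 * v * (u + v)) := by gcongr
    _ < x * (v - u) * (u ^ 2 * v * (2 * v)) := by gcongr; linarith
    _ = 2 * x * (v - u) * (u ^ 2 * v ^ 2) := by ring

theorem mul_sub_le_cube_mul_div_sq_sub_div_sq (hx : 0 ≤ x) (hM : 0 < M) (hMu : M ≤ u)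
    (huv : u ≤ v) (hv2M : v ≤ 2 * M) :
    x * (v - u) ≤ 8 * M ^ 3 * (x / u ^ 2 - x / v ^ 2) := by
  have hu : 0 < u := hM.trans_le hMu
  have hv : 0 < v := hu.trans_le huv
  rw [div_sq_sub_div_sq hu.ne' hv.ne', mul_div_assoc', le_div_iff₀ (by positivity)]
  have hxvu : 0 ≤ x * (v - u) := mul_nonneg hx (by linarith)
  calc x * (v - u) * (u ^ 2 * v ^ 2) ≤ x * (v - u) * ((2 * M) ^ 2 * (2 * M) ^ 2) := by
        gcongr; linarith
    _ = x * (v - u) * (8 * M ^ 3 * (2 * M)) := by ring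
    _ ≤ x * (v - u) * (8 * M ^ 3 * (u + v)) := by gcongr; linarith
    _ = 8 * M ^ 3 * (x * (v - u) * (u + v)) := by ring

end DivSq

theorem four_mul_mul_lt_of_le_cbrt_of_le_sqrt {x h M : ℝ} (hx : Real.exp 41 ≤ x) (hh : 0 ≤ h)
    (hhx : h ≤ 2 * x ^ ((1 : ℝ) / 3)) (hM : 0 ≤ M) (hMx : M ≤ Real.sqrt (2 * x)) :
    4 * h * M < x := by
  have hx0 : 0 < x := (Real.exp_pos 41).trans_le hx
  have hx_large : (2 : ℝ) ^ 21 < x := by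
    calc (2 : ℝ) ^ 21 < 2 ^ 41 := by norm_num
      _ < Real.exp 1 ^ 41 := by gcongr; exact Real.exp_one_gt_two
      _ = Real.exp 41 := by rw [← Real.exp_nat_mul]; norm_num
      _ ≤ x := hx
  have hh3 : h ^ 3 ≤ 8 * x := by
    calc h ^ 3 ≤ (2 * x ^ ((1 : ℝ) / 3)) ^ 3 := by gcongr
      _ = 8 * x := by
        rw [mul_pow, ← Real.rpow_natCast (x ^ _) 3, ← Real.rpow_mul hx0.le]; norm_num
  have hM2 : M ^ 2 ≤ 2 * x := by
    calc M ^ 2 ≤ Real.sqrt (2 * x) ^ 2 := by gcongr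
      _ = 2 * x := Real.sq_sqrt (by positivity)
  refine lt_of_pow_lt_pow_left₀ 6 hx0.le ?_
  calc (4 * h * M) ^ 6 = 4096 * (h ^ 3) ^ 2 * (M ^ 2) ^ 3 := by ring
    _ ≤ 4096 * (8 * x) ^ 2 * (2 * x) ^ 3 := by gcongr
    _ = 2 ^ 21 * x ^ 5 := by ring
    _ < x * x ^ 5 := by gcongr
    _ = x ^ 6 := by ring

theorem one_sub_div_sq_le_fract_of_mem_Sset {x h M N : ℝ} {u : ℤ} (hh : 0 ≤ h) (hM : 0 < M)
    (hu : u ∈ Sset x h M N) : 1 - h / M ^ 2 ≤ Int.fract (x / (u : ℝ) ^ 2) := by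
  have : h / (u : ℝ) ^ 2 ≤ h / M ^ 2 := by
    gcongr
    exact hu.2.1.le
  linarith [hu.2.2.2.1]

theorem mul_sub_lt_of_one_sub_le_fract_div_sq {x M δ u v : ℝ} (hx : 0 < x) (hM : 0 < M)
    (hδ : δ ≤ 1 / 1000) (hMu : M ≤ u) (huv : u < v) (hv : v ≤ 2 * M)
    (hu_fract : 1 - δ ≤ Int.fract (x / u ^ 2)) (hv_fract : 1 - δ ≤ Int.fract (x / v ^ 2))
    (hsmall : 2 * x * (v - u) ≤ 0.999 * M ^ 3) :
    x * (v - u) < 8 * M ^ 3 * δ := by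
  have hupper := cube_mul_div_sq_sub_div_sq_lt (x := x) hx hM hMu huv
  have hlower := mul_sub_le_cube_mul_div_sq_sub_div_sq hx.le hM hMu huv.le hv
  have hpos : 0 < x / u ^ 2 - x / v ^ 2 := by nlinarith
  have hlt : x / u ^ 2 - x / v ^ 2 < 0.999 :=
    lt_of_mul_lt_mul_left (by linarith) (by positivity : 0 ≤ M ^ 3)
  have hclose := sub_lt_of_one_sub_le_fract hu_fract hv_fract (by linarith) (by linarith)
  calc x * (v - u) ≤ 8 * M ^ 3 * (x / u ^ 2 - x / v ^ 2) := hlower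
    _ < 8 * M ^ 3 * δ := by gcongr

theorem two_le_of_odd_of_odd_add {u a : ℤ} (hu : Odd u) (hua : Odd (u + a)) (ha : 0 < a) :
    2 ≤ a := by
  obtain ⟨k, hk⟩ : Even (u + a - u) := hua.sub_odd hu
  omega

theorem pair_spacing_general (x h lam H M : ℝ) (u a : ℤ)
    (hx : Real.exp 41 ≤ x) (hh1 : (1000 : ℝ) ≤ h) (hh2 : h ≤ 2 * x ^ ((1 : ℝ) / 3))
    (hlam2 : lam ≤ 2)
    (hhH : h ≤ H) (hHM : H ≤ M) (hM : M ≤ Real.sqrt (2 * x))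
    (ha : 0 < a)
    (hu : u ∈ Sset x h M (lam * M)) (hua : u + a ∈ Sset x h M (lam * M)) :
    (a : ℝ) > 0.4995 * x⁻¹ * M ^ 3 := by
  have hx0 : 0 < x := (Real.exp_pos 41).trans_le hx
  have hM0 : 0 < M := by linarith
  have hδ : h / M ^ 2 ≤ 1 / 1000 := by
    rw [div_le_div_iff₀ (by positivity) (by norm_num)]
    nlinarith
  have ha2 : (2 : ℝ) ≤ a := by exact_mod_cast two_le_of_odd_of_odd_add hu.1 hua.1 ha
  have hp := one_sub_div_sq_le_fract_of_mem_Sset (by linarith) hM0 hu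
  have hq := one_sub_div_sq_le_fract_of_mem_Sset (by linarith) hM0 hua
  have hv : ((u + a : ℤ) : ℝ) ≤ 2 * M := hua.2.2.1.trans (by nlinarith)
  push_cast at hp hq hv
  by_contra! hsmall
  have hxa : 2 * x * (u + a - u) ≤ 0.999 * M ^ 3 := by
    have hcancel : x * (0.4995 * x⁻¹ * M ^ 3) = 0.4995 * M ^ 3 := by field_simp
    nlinarith [mul_le_mul_of_nonneg_left hsmall hx0.le]
  have hclose := mul_sub_lt_of_one_sub_le_fract_div_sq hx0 hM0 hδ hu.2.1.le
    (by linarith) hv hp hq hxa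
  have hx_large := four_mul_mul_lt_of_le_cbrt_of_le_sqrt hx (by linarith) hh2 hM0.le hM
  have hscale : 8 * M ^ 3 * (h / M ^ 2) = 8 * M * h := by field_simp
  nlinarith

/-- Lemma 3 (spacing for pairs): two distinct elements of `S(M)` differ by more than
`0.4995·x⁻¹·M³`. -/
theorem pair_spacing (x h lam H M : ℝ) (u a : ℤ)
    (hx : Real.exp 41 ≤ x) (hh1 : (1000 : ℝ) ≤ h) (hh2 : h ≤ 2 * x ^ ((1 : ℝ) / 3))
    (hlam1 : 1 < lam) (hlam2 : lam ≤ 2)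
    (hhH : h ≤ H) (hHM : H ≤ M) (hM : M ≤ Real.sqrt (2 * x)) (hH : (1000 : ℝ) ≤ H)
    (ha : 0 < a)
    (hu : u ∈ Sset x h M (lam * M)) (hua : u + a ∈ Sset x h M (lam * M)) :
    (a : ℝ) > 0.4995 * x⁻¹ * M ^ 3 :=
  pair_spacing_general x h lam H M u a hx hh1 hh2 hlam2 hhH hHM hM ha hu hua
end

section
/- Let x ≥ e^{41}, 1000 ≤ h ≤ 2·x^{1/3}, let λ ∈ (1, 2], and let H, M be reals with h ≤ H ≤ M ≤ √(2x) and H ≥ 1000. Then the number of elements of S(M) satisfies |S(M)| ≤ (0.4995)^{-1}·(λ − 1)·x·M^{-2} + 1. -/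
lemma ncard_intCast_preimage_Ioc_le {A B : ℝ} (hAB : A ≤ B) :
    ((Int.cast ⁻¹' Set.Ioc A B : Set ℤ).ncard : ℝ) ≤ B - A + 1 := by
  have hfloor : ⌊A⌋ ≤ ⌊B⌋ := Int.floor_le_floor hAB
  rw [Int.preimage_Ioc, ← Finset.coe_Ioc, Set.ncard_coe_finset, Int.card_Ioc,
    ← Int.cast_natCast, Int.toNat_of_nonneg (by omega), Int.cast_sub]
  linarith [Int.floor_le B, Int.lt_floor_add_one A]

lemma ncard_le_of_injOn_intCast_Ioc {α : Type*} {S : Set α} {f : α → ℤ} {A B : ℝ} (hAB : A ≤ B)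
    (hf : Set.InjOn f S) (hmaps : ∀ u ∈ S, A < (f u : ℝ) ∧ (f u : ℝ) ≤ B) :
    (S.ncard : ℝ) ≤ B - A + 1 :=
  le_trans (Nat.cast_le.2 (Set.ncard_le_ncard_of_injOn f hmaps hf
    (by rw [Int.preimage_Ioc]; exact Set.finite_Ioc _ _))) (ncard_intCast_preimage_Ioc_le hAB)

lemma floor_add_one_le_of_one_sub_le_fract {θ δ : ℝ} (h : 1 - δ ≤ Int.fract θ) :
    (⌊θ⌋ : ℝ) + 1 ≤ θ + δ := by
  linarith [Int.floor_add_fract θ]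

lemma div_sq_sub_div_sq_ge {x h M u v : ℝ} (hM : 0 < M) (hh : 0 ≤ h) (hx : 4 * h * M ≤ x)
    (hMu : M < u) (huv : u + 2 ≤ v) (hv : v ≤ 2 * M) : h / M ^ 2 ≤ x / u ^ 2 - x / v ^ 2 := by
  have hu : 0 < u := hM.trans hMu
  have hv0 : 0 < v := by linarith
  have hx0 : 0 ≤ x := le_trans (by positivity) hx
  have hdiff : 4 * M ≤ v ^ 2 - u ^ 2 := by nlinarith
  have huv2 : u ^ 2 * v ^ 2 ≤ 16 * M ^ 4 := by
    have : u * v ≤ 4 * M ^ 2 := by nlinarith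
    nlinarith [mul_pos hu hv0]
  rw [div_sub_div _ _ (by positivity) (by positivity),
    div_le_div_iff₀ (by positivity) (by positivity)]
  calc h * (u ^ 2 * v ^ 2) ≤ h * (16 * M ^ 4) := by gcongr
    _ = (4 * h * M) * M ^ 2 * (4 * M) := by ring
    _ ≤ x * M ^ 2 * (v ^ 2 - u ^ 2) := by gcongr
    _ = (x * v ^ 2 - u ^ 2 * x) * M ^ 2 := by ring

lemma intCast_add_two_le_of_odd {u v : ℤ} (hu : Odd u) (hv : Odd v) (huv : u < v) :
    (u : ℝ) + 2 ≤ v := by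
  exact_mod_cast (Int.add_two_le_iff_lt_of_even_sub (hv.sub_odd hu)).2 huv

section Sset

variable {x h M N : ℝ}

lemma Sset_subsingleton (hMN : N ≤ M + 2) : (Sset x h M N).Subsingleton := by
  have key : ∀ u ∈ Sset x h M N, ∀ v ∈ Sset x h M N, ¬ u < v := by
    rintro u ⟨hu, hMu, -⟩ v ⟨hv, -, hvN, -⟩ huv
    linarith [intCast_add_two_le_of_odd hu hv huv]
  intro u hu v hv
  exact le_antisymm (not_lt.1 (key v hv u hu)) (not_lt.1 (key u hu v hv))

lemma strictAntiOn_floor_add_one_Sset (hM : 0 < M) (hh : 0 ≤ h) (hx : 4 * h * M ≤ x)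
    (hN : N ≤ 2 * M) : StrictAntiOn (fun u : ℤ => ⌊x / (u : ℝ) ^ 2⌋ + 1) (Sset x h M N) := by
  rintro u ⟨hu, hMu, -⟩ v ⟨hv, hMv, hvN, hfract, -⟩ huv
  have hgap :=
    div_sq_sub_div_sq_ge hM hh hx hMu (intCast_add_two_le_of_odd hu hv huv) (hvN.trans hN)
  have hhv : h / (v : ℝ) ^ 2 ≤ h / M ^ 2 := by gcongr
  have : ((⌊x / (v : ℝ) ^ 2⌋ + 1 : ℤ) : ℝ) < ⌊x / (u : ℝ) ^ 2⌋ + 1 := by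
    push_cast
    linarith [floor_add_one_le_of_one_sub_le_fract hfract, Int.lt_floor_add_one (x / (u : ℝ) ^ 2)]
  exact_mod_cast this

lemma ncard_Sset_le (hM : 0 < M) (hh : 0 ≤ h) (hx : 4 * h * M ≤ x) (hMN : M ≤ N)
    (hN : N ≤ 2 * M) : ((Sset x h M N).ncard : ℝ) ≤ x / M ^ 2 + h / M ^ 2 - x / N ^ 2 + 1 := by
  have hx0 : 0 ≤ x := le_trans (by positivity) hx
  have hxN : x / N ^ 2 ≤ x / M ^ 2 := by gcongr
  refine ncard_le_of_injOn_intCast_Ioc (le_add_of_le_of_nonneg hxN (by positivity))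
    (strictAntiOn_floor_add_one_Sset hM hh hx hN).injOn ?_
  rintro u ⟨-, hMu, huN, hfract, -⟩
  have hu : 0 < (u : ℝ) := hM.trans hMu
  push_cast
  constructor
  · calc x / N ^ 2 ≤ x / (u : ℝ) ^ 2 := by gcongr
      _ < _ := Int.lt_floor_add_one _
  · calc _ ≤ x / (u : ℝ) ^ 2 + h / (u : ℝ) ^ 2 := floor_add_one_le_of_one_sub_le_fract hfract
      _ ≤ x / M ^ 2 + h / M ^ 2 := by gcongr

end Sset

lemma cube_le_exp_41 : (499001 : ℝ) ^ 3 ≤ Real.exp 41 :=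
  calc (499001 : ℝ) ^ 3 ≤ 2.7182818283 ^ 41 := by norm_num
    _ ≤ Real.exp 1 ^ 41 := by gcongr; exact Real.exp_one_gt_d9.le
    _ = Real.exp 41 := by rw [← Real.exp_nat_mul]; norm_num

lemma mul_le_of_exp_41_le {x h M : ℝ} (hx : Real.exp 41 ≤ x) (hh : 0 ≤ h)
    (hh2 : h ≤ 2 * x ^ ((1 : ℝ) / 3)) (hM : M ^ 2 ≤ 2 * x) : 999 * h * M ≤ 4 * x := by
  have hx0 : 0 < x := (Real.exp_pos 41).trans_le hx
  have hc3 : (x ^ ((1 : ℝ) / 3)) ^ 3 = x := by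
    rw [one_div]; exact_mod_cast Real.rpow_inv_natCast_pow hx0.le three_ne_zero
  have hc0 : 0 < x ^ ((1 : ℝ) / 3) := Real.rpow_pos_of_pos hx0 _
  set c := x ^ ((1 : ℝ) / 3)
  have hc : 499001 ≤ c := le_of_pow_le_pow_left₀ (by norm_num) (by positivity)
    (hc3 ▸ cube_le_exp_41.trans hx)
  have hsq : (999 * h * M) ^ 2 ≤ (4 * x) ^ 2 :=
    calc (999 * h * M) ^ 2 = 999 ^ 2 * h ^ 2 * M ^ 2 := by ring
      _ ≤ 999 ^ 2 * (2 * c) ^ 2 * (2 * c ^ 3) := by rw [hc3]; gcongr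
      _ ≤ (4 * c ^ 3) ^ 2 := by nlinarith [pow_pos hc0 5]
      _ = (4 * x) ^ 2 := by rw [hc3]
  exact (le_abs_self _).trans (abs_le_of_sq_le_sq hsq (by positivity))

lemma div_sq_sub_div_mul_sq_le {x lam : ℝ} (M : ℝ) (hx : 0 ≤ x) (hlam : 1 ≤ lam) :
    x / M ^ 2 - x / (lam * M) ^ 2 ≤ 2 * (lam - 1) * x / M ^ 2 := by
  have hfactor : 1 - 1 / lam ^ 2 ≤ 2 * (lam - 1) := by
    have hlam0 : lam ^ 2 ≠ 0 := by positivity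
    rw [show 1 - 1 / lam ^ 2 = (lam - 1) * (lam + 1) / lam ^ 2 by field_simp; ring,
      div_le_iff₀ (by positivity)]
    nlinarith [mul_nonneg (mul_self_nonneg (lam - 1)) (by linarith : 0 ≤ 2 * lam + 1)]
  calc x / M ^ 2 - x / (lam * M) ^ 2 = (1 - 1 / lam ^ 2) * x / M ^ 2 := by ring
    _ ≤ 2 * (lam - 1) * x / M ^ 2 := by gcongr

theorem card_Sset_pair_general (x h lam H M : ℝ)
    (hx : Real.exp 41 ≤ x) (hh1 : (1000 : ℝ) ≤ h) (hh2 : h ≤ 2 * x ^ ((1 : ℝ) / 3))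
    (hlam1 : 1 < lam) (hlam2 : lam ≤ 2)
    (hHM : H ≤ M) (hM : M ≤ Real.sqrt (2 * x)) (hH : (1000 : ℝ) ≤ H) :
    ((Sset x h M (lam * M)).ncard : ℝ) ≤ (0.4995 : ℝ)⁻¹ * (lam - 1) * x * M ^ (-(2 : ℝ)) + 1 := by
  have hx0 : 0 < x := (Real.exp_pos 41).trans_le hx
  have hM0 : 0 < M := by linarith
  have hh0 : 0 ≤ h := by linarith
  have hhM : 999 * h * M ≤ 4 * x :=
    mul_le_of_exp_41_le hx hh0 hh2 ((Real.le_sqrt hM0.le (by positivity)).1 hM)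
  rw [Real.rpow_neg hM0.le, Real.rpow_two, ← div_eq_mul_inv]
  by_cases hshort : (lam - 1) * M ≤ 2
  · have hsub : (Sset x h M (lam * M)).Subsingleton := Sset_subsingleton (by linarith)
    have := hsub.finite.to_subtype
    have hle : ((Sset x h M (lam * M)).ncard : ℝ) ≤ 1 := by
      exact_mod_cast Set.ncard_le_one_iff_subsingleton.2 hsub
    have hlam : 0 ≤ lam - 1 := by linarith
    have hmain : 0 ≤ (0.4995 : ℝ)⁻¹ * (lam - 1) * x / M ^ 2 := by positivity
    linarith
  · have hh999 : 999 * h ≤ 2 * (lam - 1) * x := by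
      refine le_of_mul_le_mul_right ?_ hM0
      nlinarith [mul_lt_mul_of_pos_right (not_le.1 hshort) hx0]
    calc ((Sset x h M (lam * M)).ncard : ℝ) ≤ x / M ^ 2 + h / M ^ 2 - x / (lam * M) ^ 2 + 1 :=
          ncard_Sset_le hM0 hh0 (by linarith [mul_nonneg hh0 hM0.le])
            (le_mul_of_one_le_left hM0.le hlam1.le) (by gcongr)
      _ ≤ 2 * (lam - 1) * x / M ^ 2 + 2 * (lam - 1) * x / 999 / M ^ 2 + 1 := by
          have hxM := div_sq_sub_div_mul_sq_le M hx0.le hlam1.le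
          have hhM' : h / M ^ 2 ≤ 2 * (lam - 1) * x / 999 / M ^ 2 := by gcongr; linarith
          linarith
      _ = (0.4995 : ℝ)⁻¹ * (lam - 1) * x / M ^ 2 + 1 := by ring

/-- Corollary 1: bound on the cardinality of `S(M)`. -/
theorem card_Sset_pair (x h lam H M : ℝ)
    (hx : Real.exp 41 ≤ x) (hh1 : (1000 : ℝ) ≤ h) (hh2 : h ≤ 2 * x ^ ((1 : ℝ) / 3))
    (hlam1 : 1 < lam) (hlam2 : lam ≤ 2)
    (hhH : h ≤ H) (hHM : H ≤ M) (hM : M ≤ Real.sqrt (2 * x)) (hH : (1000 : ℝ) ≤ H) :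
    ((Sset x h M (lam * M)).ncard : ℝ) ≤ (0.4995 : ℝ)⁻¹ * (lam - 1) * x * M ^ (-(2 : ℝ)) + 1 :=
  card_Sset_pair_general x h lam H M hx hh1 hh2 hlam1 hlam2 hHM hM hH
end

section
/- Let x ≥ e^{41}, 1000 ≤ h ≤ 2·x^{1/3}, let λ ∈ (1, 1.2], let m ≥ 1.5, and let M be a real with m·h = H ≤ M ≤ √(2x). If a, b are integers with 0 < a < b and u, u + a, u + b are all elements of S(M), then b ≥ 1.3860·x^{-1/3}·M^{4/3}. -/
open Real Set

lemma exists_int_mem_Ioc_of_mem_Sset {x h M N : ℝ} {u : ℤ} (hu : u ∈ Sset x h M N) (hM : 0 < M)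
    (hh : 0 ≤ h) : ∃ n : ℤ, (n : ℝ) ∈ Ioc (x / u ^ 2) (x / u ^ 2 + h / M ^ 2) := by
  obtain ⟨-, hMu, -, hfract, -⟩ := hu
  have hu2 : h / (u : ℝ) ^ 2 ≤ h / M ^ 2 := by gcongr
  refine ⟨⌊x / u ^ 2⌋ + 1, ?_, ?_⟩ <;> push_cast
  · exact Int.lt_floor_add_one _
  · linarith [Int.self_sub_fract (x / (u : ℝ) ^ 2)]

lemma one_div_mul_mem_Icc {M N p q r s : ℝ} (hM : 0 < M) (hp : p ∈ Icc M N)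
    (hq : q ∈ Icc M N) (hr : r ∈ Icc M N) (hs : s ∈ Icc M N) :
    1 / (p * q * r * s) ∈ Icc (1 / N ^ 4) (1 / M ^ 4) := by
  obtain ⟨hp, hp'⟩ := hp
  obtain ⟨hq, hq'⟩ := hq
  obtain ⟨hr, hr'⟩ := hr
  obtain ⟨hs, hs'⟩ := hs
  constructor <;> apply one_div_le_one_div_of_le (by bound)
  · calc p * q * r * s ≤ N * N * N * N := by bound
      _ = N ^ 4 := by ring
  · calc M ^ 4 = M * M * M * M := by ring
      _ ≤ p * q * r * s := by bound

lemma div_sq_sub_div_sq_s10 (x t a : ℝ) (ht : t ≠ 0) (hta : t + a ≠ 0) :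
    x / t ^ 2 - x / (t + a) ^ 2 = x * a * (t + (t + a)) * (1 / (t * t * (t + a) * (t + a))) := by
  field_simp
  ring

lemma second_difference_div_sq (x t a b : ℝ) (ht : t ≠ 0) (hta : t + a ≠ 0) (htb : t + b ≠ 0) :
    (b - a) * (x / t ^ 2) - b * (x / (t + a) ^ 2) + a * (x / (t + b) ^ 2) =
      x * a * b * (b - a) * (1 / (t * (t + a) * (t + b) * (t + b)) +
        1 / (t * (t + a) * (t + a) * (t + b)) + 1 / (t * t * (t + a) * (t + b))) := by
  field_simp
  ring

lemma div_sq_sub_div_sq_mem_Icc {x M N t a : ℝ} (hx : 0 ≤ x) (hM : 0 < M) (ha : 0 ≤ a)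
    (ht : M ≤ t) (hta : t + a ≤ N) :
    x / t ^ 2 - x / (t + a) ^ 2 ∈ Icc (2 * x * a * M / N ^ 4) (2 * x * a * N / M ^ 4) := by
  have h₀ : t ∈ Icc M N := ⟨ht, by linarith⟩
  have h₁ : t + a ∈ Icc M N := ⟨by linarith, hta⟩
  obtain ⟨hlo, hhi⟩ := one_div_mul_mem_Icc hM h₀ h₀ h₁ h₁
  rw [div_sq_sub_div_sq_s10 x t a (by linarith) (by linarith)]
  have : 0 ≤ t := by linarith
  constructor
  · calc 2 * x * a * M / N ^ 4 = x * a * (M + M) * (1 / N ^ 4) := by ring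
      _ ≤ _ := by bound
  · calc _ ≤ x * a * (N + N) * (1 / M ^ 4) := by bound
      _ = 2 * x * a * N / M ^ 4 := by ring

lemma second_difference_div_sq_mem_Icc {x M N t a b : ℝ} (hx : 0 ≤ x) (hM : 0 < M) (ha : 0 < a)
    (hab : a < b) (ht : M ≤ t) (htb : t + b ≤ N) :
    (b - a) * (x / t ^ 2) - b * (x / (t + a) ^ 2) + a * (x / (t + b) ^ 2) ∈
      Icc (3 * x * a * b * (b - a) / N ^ 4) (3 * x * a * b * (b - a) / M ^ 4) := by
  have h₀ : t ∈ Icc M N := ⟨ht, by linarith⟩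
  have h₁ : t + a ∈ Icc M N := ⟨by linarith, by linarith⟩
  have h₂ : t + b ∈ Icc M N := ⟨by linarith, htb⟩
  obtain ⟨hlo₁, hhi₁⟩ := one_div_mul_mem_Icc hM h₀ h₁ h₂ h₂
  obtain ⟨hlo₂, hhi₂⟩ := one_div_mul_mem_Icc hM h₀ h₁ h₁ h₂
  obtain ⟨hlo₃, hhi₃⟩ := one_div_mul_mem_Icc hM h₀ h₀ h₁ h₂
  rw [second_difference_div_sq x t a b (by linarith) (by linarith) (by linarith)]
  have hc : 0 ≤ x * a * b * (b - a) := by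
    have : 0 ≤ b - a := by linarith
    bound
  constructor
  · calc 3 * x * a * b * (b - a) / N ^ 4
          = x * a * b * (b - a) * (1 / N ^ 4 + 1 / N ^ 4 + 1 / N ^ 4) := by ring
      _ ≤ _ := by gcongr
  · calc _ ≤ x * a * b * (b - a) * (1 / M ^ 4 + 1 / M ^ 4 + 1 / M ^ 4) := by gcongr
      _ = 3 * x * a * b * (b - a) / M ^ 4 := by ring

lemma one_lt_sub_add_of_mem_Ioc {p q E : ℝ} {n m : ℤ} (hn : (n : ℝ) ∈ Ioc p (p + E))
    (hm : (m : ℝ) ∈ Ioc q (q + E)) (hsep : E ≤ p - q) : 1 < p - q + E := by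
  have hmn : m < n := by exact_mod_cast (show (m : ℝ) < n by linarith [hm.2, hn.1])
  have : (m : ℝ) + 1 ≤ n := by exact_mod_cast hmn
  linarith [hn.2, hm.1]

lemma abs_second_difference_sub_lt {p₀ p₁ p₂ n₀ n₁ n₂ E a b : ℝ} (ha : 0 < a) (hab : a < b)
    (h₀ : n₀ ∈ Ioc p₀ (p₀ + E)) (h₁ : n₁ ∈ Ioc p₁ (p₁ + E)) (h₂ : n₂ ∈ Ioc p₂ (p₂ + E)) :
    |((b - a) * n₀ - b * n₁ + a * n₂) - ((b - a) * p₀ - b * p₁ + a * p₂)| < b * E := by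
  obtain ⟨h₀, h₀'⟩ := h₀
  obtain ⟨h₁, h₁'⟩ := h₁
  obtain ⟨h₂, h₂'⟩ := h₂
  have hba : 0 < b - a := by linarith
  rw [abs_sub_lt_iff]
  constructor <;> nlinarith [mul_lt_mul_of_pos_left h₂ ha, mul_le_mul_of_nonneg_left h₂' ha.le,
    mul_lt_mul_of_pos_left h₀ hba, mul_le_mul_of_nonneg_left h₀' hba.le,
    mul_lt_mul_of_pos_left h₁ (ha.trans hab), mul_le_mul_of_nonneg_left h₁' (ha.trans hab).le]

lemma mul_div_sq_le_second_difference {x h M t a b : ℝ} {n m : ℤ} (hM : 2 ≤ M)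
    (hhM : 3 / 2 * h ≤ M) (hMx : M ^ 2 ≤ 2 * x) (ha : 2 ≤ a) (hab : 2 ≤ b - a) (ht : M ≤ t)
    (htb : t + b ≤ 6 / 5 * M) (hn : (n : ℝ) ∈ Ioc (x / t ^ 2) (x / t ^ 2 + h / M ^ 2))
    (hm : (m : ℝ) ∈ Ioc (x / (t + a) ^ 2) (x / (t + a) ^ 2 + h / M ^ 2)) :
    b * (h / M ^ 2) ≤ (b - a) * (x / t ^ 2) - b * (x / (t + a) ^ 2) + a * (x / (t + b) ^ 2) := by
  have hM0 : 0 < M := by linarith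
  have hx : 0 ≤ x := by nlinarith
  obtain ⟨hPlo, hPhi⟩ :=
    div_sq_sub_div_sq_mem_Icc (N := 6 / 5 * M) (a := a) hx hM0 (by linarith) ht (by linarith)
  have hDlo :=
    (second_difference_div_sq_mem_Icc (a := a) hx hM0 (by linarith) (by linarith) ht htb).1
  have hsep : h / M ^ 2 ≤ x / t ^ 2 - x / (t + a) ^ 2 := by
    refine le_trans ?_ hPlo
    have hhx : h * M ≤ 4 / 3 * x := by nlinarith
    rw [div_le_div_iff₀ (by positivity) (by positivity)]
    have hxM : 0 ≤ x * M ^ 3 := by positivity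
    nlinarith [mul_le_mul_of_nonneg_right hhx (pow_nonneg hM0.le 3),
      mul_le_mul_of_nonneg_right ha hxM]
  have hpair : M ^ 3 < 12 / 5 * x * a + h * M := by
    have := (one_lt_sub_add_of_mem_Ioc hn hm hsep).trans_le (add_le_add_left hPhi _)
    field_simp at this
    nlinarith
  by_contra! hlt
  have hxa : 6 * x * a < 1296 / 625 * h * M ^ 2 := by
    have := hDlo.trans_lt hlt
    field_simp at this
    have hxa : 0 ≤ x * a := by positivity
    have : 3 * x * a * (b - a) * 625 < 1296 * M ^ 2 * h :=
      lt_of_mul_lt_mul_left (a := b) (by linarith) (by linarith)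
    nlinarith
  nlinarith

lemma two_mul_pow_four_lt {x h M t : ℝ} {a b n₀ n₁ n₂ : ℤ} (ha : Even a) (hb : Even b)
    (ha0 : 0 < a) (hab : a < b) (hM : 2 ≤ M) (hhM : 3 / 2 * h ≤ M)
    (hMx : M ^ 2 ≤ 2 * x) (ht : M ≤ t) (htb : t + b ≤ 6 / 5 * M)
    (hn₀ : (n₀ : ℝ) ∈ Ioc (x / t ^ 2) (x / t ^ 2 + h / M ^ 2))
    (hn₁ : (n₁ : ℝ) ∈ Ioc (x / (t + a) ^ 2) (x / (t + a) ^ 2 + h / M ^ 2))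
    (hn₂ : (n₂ : ℝ) ∈ Ioc (x / (t + b) ^ 2) (x / (t + b) ^ 2 + h / M ^ 2)) :
    2 * M ^ 4 < 3 / 4 * x * b ^ 3 + b * h * M ^ 2 := by
  have hM0 : 0 < M := by linarith
  have hx : 0 ≤ x := by nlinarith
  have ha2 : (2 : ℝ) ≤ a := by obtain ⟨k, rfl⟩ := ha; exact_mod_cast (by omega : 2 ≤ k + k)
  have hab2 : (2 : ℝ) ≤ b - a := by
    obtain ⟨k, rfl⟩ := ha; obtain ⟨l, rfl⟩ := hb
    exact_mod_cast (by omega : 2 ≤ l + l - (k + k))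
  have hab' : (a : ℝ) < b := by linarith
  have hDhi := (second_difference_div_sq_mem_Icc hx hM0 (by linarith) hab' ht htb).2
  have hDlo := mul_div_sq_le_second_difference hM hhM hMx ha2 hab2 ht htb hn₀ hn₁
  have hKD := abs_second_difference_sub_lt (by linarith) hab' hn₀ hn₁ hn₂
  obtain ⟨hKlt, hKgt⟩ := abs_sub_lt_iff.mp hKD
  have hK2 : (2 : ℝ) ≤ (b - a) * n₀ - b * n₁ + a * n₂ := by
    have hKeven : Even ((b - a) * n₀ - b * n₁ + a * n₂) :=
      (((hb.sub ha).mul_right _).sub (hb.mul_right _)).add (ha.mul_right _)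
    have hKpos : 0 < (b - a) * n₀ - b * n₁ + a * n₂ := by
      exact_mod_cast (show (0 : ℝ) < (b - a) * n₀ - b * n₁ + a * n₂ by linarith)
    obtain ⟨k, hk⟩ := hKeven
    exact_mod_cast (by omega : 2 ≤ (b - a) * n₀ - b * n₁ + a * n₂)
  have hquad : (a : ℝ) * (b - a) ≤ b ^ 2 / 4 := by nlinarith [sq_nonneg (2 * (a : ℝ) - b)]
  have h2 : 2 < 3 * x * a * b * (b - a) / M ^ 4 + b * (h / M ^ 2) := by linarith
  field_simp at h2
  have hxb : 0 ≤ x * b := mul_nonneg hx (by linarith)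
  nlinarith [mul_le_mul_of_nonneg_left hquad hxb]

lemma le_mul_mul_sq {X Y h : ℝ} (hX : 13000 ≤ X) (hh : 0 ≤ h) (hhX : h ≤ 2 * X)
    (hhY : 3 / 2 * h ≤ Y ^ 3) : h ≤ 0.00223 * X * Y ^ 2 := by
  have hX0 : 0 < X := by linarith
  have hY0 : 0 ≤ Y ^ 3 := by linarith
  have hY : 0 ≤ Y := (Odd.pow_nonneg_iff (by decide)).mp hY0
  refine le_of_pow_le_pow_left₀ three_ne_zero (by positivity) ?_
  have hh2 : h ^ 2 ≤ 4 / 9 * (Y ^ 3) ^ 2 := by nlinarith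
  have hX2 : (13000 : ℝ) ^ 2 ≤ X ^ 2 := by gcongr
  calc h ^ 3 = h * h ^ 2 := by ring
    _ ≤ 2 * X * (4 / 9 * (Y ^ 3) ^ 2) := by gcongr
    _ = 8 / 9 * X * (Y ^ 3) ^ 2 := by ring
    _ ≤ 0.00223 ^ 3 * X ^ 2 * X * (Y ^ 3) ^ 2 := by gcongr; nlinarith
    _ = (0.00223 * X * Y ^ 2) ^ 3 := by ring

lemma le_inv_mul_pow_four {X Y h b : ℝ} (hX : 0 < X) (hY : 0 < Y) (hb : 0 ≤ b)
    (hh : h ≤ 0.00223 * X * Y ^ 2)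
    (key : 2 * (Y ^ 3) ^ 4 < 3 / 4 * X ^ 3 * b ^ 3 + b * h * (Y ^ 3) ^ 2) :
    1.3860 * X⁻¹ * Y ^ 4 ≤ b := by
  by_contra! hlt
  have hc : b * X < 1.3860 * Y ^ 4 := by
    calc b * X < 1.3860 * X⁻¹ * Y ^ 4 * X := by gcongr
      _ = 1.3860 * Y ^ 4 := by field_simp
  have hc3 : (b * X) ^ 3 < (1.3860 * Y ^ 4) ^ 3 := by gcongr
  have hbh : b * h * (Y ^ 3) ^ 2 ≤ 0.00223 * (b * X) * Y ^ 8 := by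
    calc b * h * (Y ^ 3) ^ 2 ≤ b * (0.00223 * X * Y ^ 2) * (Y ^ 3) ^ 2 := by gcongr
      _ = 0.00223 * (b * X) * Y ^ 8 := by ring
  nlinarith [mul_lt_mul_of_pos_right hc (pow_pos hY 8)]

lemma rpow_one_third_pow_three {x : ℝ} (hx : 0 ≤ x) : (x ^ (1 / 3 : ℝ)) ^ 3 = x := by
  rw [one_div]
  exact_mod_cast rpow_inv_natCast_pow hx three_ne_zero

lemma le_rpow_one_third_of_exp_le {x : ℝ} (hx : exp 41 ≤ x) : 13000 ≤ x ^ (1 / 3 : ℝ) := by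
  have hx0 : 0 ≤ x := (exp_pos 41).le.trans hx
  refine le_of_pow_le_pow_left₀ three_ne_zero (by positivity) ?_
  rw [rpow_one_third_pow_three hx0]
  calc (13000 : ℝ) ^ 3 ≤ 2 ^ 41 := by norm_num
    _ ≤ exp 1 ^ 41 := by gcongr; linarith [add_one_le_exp (1 : ℝ)]
    _ = exp 41 := by rw [← exp_nat_mul]; norm_num
    _ ≤ x := hx

lemma le_rpow_of_two_mul_pow_four_lt {x M h b : ℝ} (hx : exp 41 ≤ x) (hM : 0 < M) (hb : 0 ≤ b)
    (hh : 0 ≤ h) (hhx : h ≤ 2 * x ^ ((1 : ℝ) / 3)) (hhM : 3 / 2 * h ≤ M)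
    (key : 2 * M ^ 4 < 3 / 4 * x * b ^ 3 + b * h * M ^ 2) :
    1.3860 * x ^ (-(1 : ℝ) / 3) * M ^ ((4 : ℝ) / 3) ≤ b := by
  have hx0 : 0 < x := (exp_pos 41).trans_le hx
  have hX3 := rpow_one_third_pow_three hx0.le
  have hY3 := rpow_one_third_pow_three hM.le
  rw [neg_div, rpow_neg hx0.le, show (4 : ℝ) / 3 = 1 / 3 * (4 : ℕ) by norm_num, rpow_mul hM.le,
    rpow_natCast]
  rw [← hX3, ← hY3] at key
  rw [← hY3] at hhM
  exact le_inv_mul_pow_four (by positivity) (by positivity) hb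
    (le_mul_mul_sq (le_rpow_one_third_of_exp_le hx) hh hhx hhM) key

theorem triple_spacing_general (x h lam m H M : ℝ) (u a b : ℤ)
    (hx : Real.exp 41 ≤ x) (hh1 : (1000 : ℝ) ≤ h) (hh2 : h ≤ 2 * x ^ ((1 : ℝ) / 3))
    (hlam2 : lam ≤ 1.2) (hm : (1.5 : ℝ) ≤ m)
    (hH : m * h = H) (hHM : H ≤ M) (hM : M ≤ Real.sqrt (2 * x))
    (ha : 0 < a) (hab : a < b)
    (hu : u ∈ Sset x h M (lam * M)) (hua : u + a ∈ Sset x h M (lam * M))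
    (hub : u + b ∈ Sset x h M (lam * M)) :
    (b : ℝ) ≥ 1.3860 * x ^ (-(1 : ℝ) / 3) * M ^ ((4 : ℝ) / 3) := by
  have hhM : 3 / 2 * h ≤ M := by nlinarith
  have hM0 : 0 < M := by linarith
  have hMx : M ^ 2 ≤ 2 * x := (le_sqrt' hM0).mp hM
  obtain ⟨n₀, hn₀⟩ := exists_int_mem_Ioc_of_mem_Sset hu hM0 (by linarith)
  obtain ⟨n₁, hn₁⟩ := exists_int_mem_Ioc_of_mem_Sset hua hM0 (by linarith)
  obtain ⟨n₂, hn₂⟩ := exists_int_mem_Ioc_of_mem_Sset hub hM0 (by linarith)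
  push_cast at hn₁ hn₂
  have htb : (u : ℝ) + b ≤ 6 / 5 * M := by
    have := hub.2.2.1
    push_cast at this
    nlinarith
  have key := two_mul_pow_four_lt ((Int.odd_add.mp hua.1).mp hu.1)
    ((Int.odd_add.mp hub.1).mp hu.1) ha hab (by linarith) hhM hMx hu.2.1.le htb
    hn₀ hn₁ hn₂
  exact le_rpow_of_two_mul_pow_four_lt hx hM0 (by exact_mod_cast (ha.trans hab).le)
    (by linarith) hh2 hhM key

/-- Lemma 4 (spacing for triples). -/
theorem triple_spacing (x h lam m H M : ℝ) (u a b : ℤ)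
    (hx : Real.exp 41 ≤ x) (hh1 : (1000 : ℝ) ≤ h) (hh2 : h ≤ 2 * x ^ ((1 : ℝ) / 3))
    (hlam1 : 1 < lam) (hlam2 : lam ≤ 1.2) (hm : (1.5 : ℝ) ≤ m)
    (hH : m * h = H) (hHM : H ≤ M) (hM : M ≤ Real.sqrt (2 * x))
    (ha : 0 < a) (hab : a < b)
    (hu : u ∈ Sset x h M (lam * M)) (hua : u + a ∈ Sset x h M (lam * M))
    (hub : u + b ∈ Sset x h M (lam * M)) :
    (b : ℝ) ≥ 1.3860 * x ^ (-(1 : ℝ) / 3) * M ^ ((4 : ℝ) / 3) :=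
  triple_spacing_general x h lam m H M u a b hx hh1 hh2 hlam2 hm hH hHM hM ha hab hu hua hub
end

section
/- Let x ≥ e^{41}, 1000 ≤ h ≤ 2·x^{1/3}, let λ ∈ (1, 1.2], let m ≥ 1.5, and let M be a real with m·h = H ≤ M ≤ √(2x). Then |S(M)| ≤ 1.4430·(λ − 1)·x^{1/3}·M^{-1/3} + 2. -/
/-- `(w - u)(w - v)(v - u)` times the second divided difference of `f` at `u, v, w`. -/
def secondDiff (f : ℝ → ℝ) (u v w : ℝ) : ℝ :=
  f u * (w - v) - f v * (w - u) + f w * (v - u)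

section secondDiff

variable {u v w : ℝ}

theorem secondDiff_add (f g : ℝ → ℝ) :
    secondDiff (fun t => f t + g t) u v w = secondDiff f u v w + secondDiff g u v w := by
  simp only [secondDiff]; ring

theorem exists_even_eq_secondDiff (g : ℝ → ℤ) {u v w : ℤ} (hu : Odd u) (hv : Odd v)
    (hw : Odd w) : ∃ D : ℤ, Even D ∧ secondDiff (fun t => (g t : ℝ)) u v w = D :=
  ⟨g u * (w - v) - g v * (w - u) + g w * (v - u),
    (((hw.sub_odd hv).mul_left _).sub ((hw.sub_odd hu).mul_left _)).add
      ((hv.sub_odd hu).mul_left _),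
    by simp only [secondDiff]; push_cast; ring⟩

theorem secondDiff_div_sq (x : ℝ) (hu : u ≠ 0) (hv : v ≠ 0) (hw : w ≠ 0) :
    secondDiff (fun t => x / t ^ 2) u v w = x * ((v - u) * (w - v) * (w - u)) *
      (1 / (u * v * w * w) + 1 / (u * u * v * w) + 1 / (u * v * v * w)) := by
  simp only [secondDiff]; field_simp; ring

theorem one_div_mem_Icc_of_mem_Icc {M N a b c d : ℝ} (hM : 0 < M) (ha : a ∈ Set.Icc M N)
    (hb : b ∈ Set.Icc M N) (hc : c ∈ Set.Icc M N) (hd : d ∈ Set.Icc M N) :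
    1 / (a * b * c * d) ∈ Set.Icc (1 / N ^ 4) (1 / M ^ 4) := by
  obtain ⟨ha, ha'⟩ := ha; obtain ⟨hb, hb'⟩ := hb; obtain ⟨hc, hc'⟩ := hc
  obtain ⟨hd, hd'⟩ := hd
  have ha0 : 0 < a := by linarith
  have hb0 : 0 < b := by linarith
  have hc0 : 0 < c := by linarith
  have hd0 : 0 < d := by linarith
  have hN0 : 0 < N := by linarith
  have hlow : M ^ 4 ≤ a * b * c * d := by
    calc M ^ 4 = M * M * M * M := by ring
      _ ≤ a * b * c * d := by gcongr
  have hup : a * b * c * d ≤ N ^ 4 := by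
    calc a * b * c * d ≤ N * N * N * N := by gcongr
      _ = N ^ 4 := by ring
  exact ⟨one_div_le_one_div_of_le (by positivity) hup,
    one_div_le_one_div_of_le (by positivity) hlow⟩

theorem secondDiff_div_sq_mem_Icc {x M N : ℝ} (hx : 0 ≤ x) (hM : 0 < M) (hMu : M ≤ u)
    (huv : u ≤ v) (hvw : v ≤ w) (hwN : w ≤ N) :
    secondDiff (fun t => x / t ^ 2) u v w ∈
      Set.Icc (3 * x * ((v - u) * (w - v) * (w - u)) / N ^ 4)
        (3 * x * ((v - u) * (w - v) * (w - u)) / M ^ 4) := by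
  have hu : u ∈ Set.Icc M N := ⟨hMu, by linarith⟩
  have hv : v ∈ Set.Icc M N := ⟨by linarith, by linarith⟩
  have hw : w ∈ Set.Icc M N := ⟨by linarith, hwN⟩
  obtain ⟨h1, h1'⟩ := one_div_mem_Icc_of_mem_Icc hM hu hv hw hw
  obtain ⟨h2, h2'⟩ := one_div_mem_Icc_of_mem_Icc hM hu hu hv hw
  obtain ⟨h3, h3'⟩ := one_div_mem_Icc_of_mem_Icc hM hu hv hv hw
  have hP : 0 ≤ x * ((v - u) * (w - v) * (w - u)) :=
    mul_nonneg hx (mul_nonneg (mul_nonneg (by linarith) (by linarith)) (by linarith))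
  rw [secondDiff_div_sq x (by linarith) (by linarith) (by linarith)]
  constructor
  · calc _ = x * ((v - u) * (w - v) * (w - u)) * (1 / N ^ 4 + 1 / N ^ 4 + 1 / N ^ 4) := by ring
      _ ≤ _ := by gcongr
  · calc _ ≤ x * ((v - u) * (w - v) * (w - u)) * (1 / M ^ 4 + 1 / M ^ 4 + 1 / M ^ 4) := by
          gcongr
      _ = _ := by ring

theorem abs_secondDiff_le {f : ℝ → ℝ} {η : ℝ} (huv : u ≤ v) (hvw : v ≤ w)
    (hu : f u ∈ Set.Icc 0 η) (hv : f v ∈ Set.Icc 0 η) (hw : f w ∈ Set.Icc 0 η) :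
    |secondDiff f u v w| ≤ η * (w - u) := by
  obtain ⟨hu, hu'⟩ := hu; obtain ⟨hv, hv'⟩ := hv; obtain ⟨hw, hw'⟩ := hw
  have h1 := mul_le_mul_of_nonneg_right hu' (sub_nonneg.mpr hvw)
  have h2 := mul_le_mul_of_nonneg_right hw' (sub_nonneg.mpr huv)
  have h3 := mul_le_mul_of_nonneg_right hv' (sub_nonneg.mpr (huv.trans hvw))
  have h4 := mul_nonneg hu (sub_nonneg.mpr hvw)
  have h5 := mul_nonneg hw (sub_nonneg.mpr huv)
  have h6 := mul_nonneg hv (sub_nonneg.mpr (huv.trans hvw))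
  rw [abs_le, secondDiff]
  constructor <;> linarith

end secondDiff

theorem Finset.card_le_two_of_forall_not_lt_lt {α : Type*} [LinearOrder α] {s : Finset α}
    (hs : ∀ u ∈ s, ∀ v ∈ s, ∀ w ∈ s, u < v → v < w → False) : s.card ≤ 2 := by
  rcases s.eq_empty_or_nonempty with rfl | hne
  · simp
  refine (Finset.card_le_card (t := {s.min' hne, s.max' hne}) fun c hc => ?_).trans
    Finset.card_le_two
  by_contra hc'
  simp only [Finset.mem_insert, Finset.mem_singleton, not_or] at hc'
  exact hs _ (s.min'_mem hne) c hc _ (s.max'_mem hne)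
    ((s.min'_le c hc).lt_of_ne (Ne.symm hc'.1)) ((s.le_max' c hc).lt_of_ne hc'.2)

theorem Set.ncard_le_of_forall_lt_lt_le_sub {S : Set ℤ} {M N l : ℝ} (hl : 0 < l) (hMN : M ≤ N)
    (hS : ∀ t ∈ S, M < t ∧ (t : ℝ) ≤ N)
    (hspaced : ∀ u ∈ S, ∀ v ∈ S, ∀ w ∈ S, u < v → v < w → l ≤ (w - u : ℝ)) :
    (S.ncard : ℝ) ≤ 2 * ((N - M) / l) + 2 := by
  have hfin : S.Finite := (Finset.Ioc ⌊M⌋ ⌈N⌉).finite_toSet.subset fun t ht => by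
    have := hS t ht
    simp only [Finset.coe_Ioc, Set.mem_Ioc, Int.floor_lt, ← Int.cast_le (R := ℝ)]
    exact ⟨this.1, this.2.trans (Int.le_ceil N)⟩
  set K := ⌊(N - M) / l⌋
  have hK : 0 ≤ K := Int.floor_nonneg.mpr (div_nonneg (sub_nonneg.mpr hMN) hl.le)
  set block : ℤ → ℤ := fun t => ⌊(t - M) / l⌋
  have hmaps : ∀ t ∈ hfin.toFinset, block t ∈ Finset.Icc 0 K := fun t ht => by
    obtain ⟨h1, h2⟩ := hS t (hfin.mem_toFinset.mp ht)
    exact Finset.mem_Icc.mpr ⟨Int.floor_nonneg.mpr (div_nonneg (by linarith) hl.le),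
      Int.floor_le_floor (div_le_div_of_nonneg_right (by linarith) hl.le)⟩
  have hfiber : ∀ k ∈ Finset.Icc 0 K, {t ∈ hfin.toFinset | block t = k}.card ≤ 2 := by
    refine fun k _ => Finset.card_le_two_of_forall_not_lt_lt fun u hu v hv w hw huv hvw => ?_
    simp only [Finset.mem_filter, Set.Finite.mem_toFinset] at hu hv hw
    have hclose := Int.abs_sub_lt_one_of_floor_eq_floor (hw.2.trans hu.2.symm)
    rw [← sub_div, sub_sub_sub_cancel_right, abs_lt, div_lt_one hl] at hclose
    linarith [hspaced u hu.1 v hv.1 w hw.1 huv hvw]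
  have hcount := Finset.card_le_mul_card_image_of_maps_to hmaps 2 hfiber
  rw [Int.card_Icc, sub_zero] at hcount
  have hKcast : (((K + 1).toNat : ℕ) : ℝ) = K + 1 := by
    exact_mod_cast Int.toNat_of_nonneg (by omega)
  rw [Set.ncard_eq_toFinset_card S hfin]
  calc (hfin.toFinset.card : ℝ) ≤ 2 * (K + 1) := by
        rw [← hKcast]; exact_mod_cast hcount
    _ ≤ 2 * ((N - M) / l) + 2 := by linarith [Int.floor_le ((N - M) / l)]

theorem Int.cast_floor_add_one_eq (y : ℝ) : ((⌊y⌋ + 1 : ℤ) : ℝ) = y + (1 - Int.fract y) := by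
  rw [Int.fract]; push_cast; ring

namespace Sset

variable {x h M N : ℝ} {a b u v w : ℤ}

theorem two_le_sub (ha : a ∈ Sset x h M N) (hb : b ∈ Sset x h M N) (hab : a < b) :
    (2 : ℝ) ≤ b - a := by
  obtain ⟨k, hk⟩ := hb.1.sub_odd ha.1
  have : (2 : ℤ) ≤ b - a := by omega
  exact_mod_cast this

theorem one_sub_fract_le (hu : u ∈ Sset x h M N) :
    1 - Int.fract (x / (u : ℝ) ^ 2) ≤ h / (u : ℝ) ^ 2 := by
  linarith [hu.2.2.2.1]

theorem one_sub_fract_le_div_sq (hM : 0 < M) (hh : 0 ≤ h) (hu : u ∈ Sset x h M N) :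
    1 - Int.fract (x / (u : ℝ) ^ 2) ≤ h / M ^ 2 :=
  (one_sub_fract_le hu).trans <| div_le_div_of_nonneg_left hh (by positivity) <|
    pow_le_pow_left₀ hM.le hu.2.1.le 2

theorem floor_lt_floor (hM : 0 < M) (hh : 0 ≤ h) (hx : 0 ≤ x) (hhN : h * N ^ 2 ≤ 4 * x * M)
    (ha : a ∈ Sset x h M N) (hb : b ∈ Sset x h M N) (hab : a < b) :
    ⌊x / (b : ℝ) ^ 2⌋ < ⌊x / (a : ℝ) ^ 2⌋ := by
  have hgap := two_le_sub ha hb hab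
  have ha0 : 0 < (a : ℝ) := hM.trans ha.2.1
  have hb0 : 0 < (b : ℝ) := hM.trans hb.2.1
  have hsq : h * (a : ℝ) ^ 2 ≤ x * ((b : ℝ) ^ 2 - (a : ℝ) ^ 2) := by
    calc h * (a : ℝ) ^ 2 ≤ h * N ^ 2 := by gcongr; exact ha.2.2.1
      _ ≤ x * (2 * (2 * M)) := by linarith
      _ ≤ x * (((b : ℝ) - a) * (b + a)) := by gcongr; linarith [ha.2.1, hb.2.1]
      _ = x * ((b : ℝ) ^ 2 - (a : ℝ) ^ 2) := by ring
  have hdiv : x / (b : ℝ) ^ 2 + h / (b : ℝ) ^ 2 ≤ x / (a : ℝ) ^ 2 := by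
    rw [← add_div, div_le_div_iff₀ (by positivity) (by positivity)]
    linarith
  have hreal : ((⌊x / (b : ℝ) ^ 2⌋ + 1 : ℤ) : ℝ) < ((⌊x / (a : ℝ) ^ 2⌋ + 1 : ℤ) : ℝ) := by
    rw [Int.cast_floor_add_one_eq, Int.cast_floor_add_one_eq]
    linarith [one_sub_fract_le hb, Int.fract_lt_one (x / (a : ℝ) ^ 2)]
  have := Int.cast_lt.mp hreal
  omega

theorem sq_mul_sub_le (hM : 0 < M) (hhM : h ≤ M ^ 2) (hx : 0 ≤ x) (ha : a ∈ Sset x h M N)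
    (hb : b ∈ Sset x h M N) (hab : a < b) (hfloor : ⌊x / (b : ℝ) ^ 2⌋ < ⌊x / (a : ℝ) ^ 2⌋) :
    M ^ 2 * (M ^ 2 - h) ≤ 2 * N * x * (b - a) := by
  have ha0 : 0 < (a : ℝ) := hM.trans ha.2.1
  have hb0 : 0 < (b : ℝ) := hM.trans hb.2.1
  have hone : (1 : ℝ) ≤ ((⌊x / (a : ℝ) ^ 2⌋ + 1 : ℤ) : ℝ) - ((⌊x / (b : ℝ) ^ 2⌋ + 1 : ℤ) : ℝ) := by
    have : (1 : ℤ) ≤ (⌊x / (a : ℝ) ^ 2⌋ + 1) - (⌊x / (b : ℝ) ^ 2⌋ + 1) := by omega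
    exact_mod_cast this
  rw [Int.cast_floor_add_one_eq, Int.cast_floor_add_one_eq] at hone
  have hdiv : 1 ≤ (x + h) / (a : ℝ) ^ 2 - x / (b : ℝ) ^ 2 := by
    linarith [one_sub_fract_le ha, Int.fract_lt_one (x / (b : ℝ) ^ 2), add_div x h ((a : ℝ) ^ 2)]
  rw [div_sub_div _ _ (by positivity) (by positivity), one_le_div (by positivity)] at hdiv
  calc M ^ 2 * (M ^ 2 - h) ≤ (b : ℝ) ^ 2 * ((a : ℝ) ^ 2 - h) := by
        gcongr
        · exact hb.2.1.le
        · exact ha.2.1.le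
    _ ≤ x * (((b : ℝ) - a) * (b + a)) := by linarith
    _ ≤ x * (((b : ℝ) - a) * (2 * N)) := by
        have hgap := two_le_sub ha hb hab
        gcongr; linarith [ha.2.2.1, hb.2.2.1]
    _ = 2 * N * x * (b - a) := by ring

theorem exists_secondDiff_floor_eq (hM : 0 < M) (hh : 0 ≤ h) (hx : 0 ≤ x)
    (hu : u ∈ Sset x h M N) (hv : v ∈ Sset x h M N) (hw : w ∈ Sset x h M N) (huv : u < v)
    (hvw : v < w) :
    ∃ F E, secondDiff (fun t => ((⌊x / t ^ 2⌋ + 1 : ℤ) : ℝ)) u v w = F + E ∧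
      F ∈ Set.Icc (3 * x * ((v - u) * (w - v) * (w - u)) / N ^ 4)
        (3 * x * ((v - u) * (w - v) * (w - u)) / M ^ 4) ∧
      |E| ≤ h / M ^ 2 * (w - u) := by
  have huv' : (u : ℝ) ≤ v := by exact_mod_cast huv.le
  have hvw' : (v : ℝ) ≤ w := by exact_mod_cast hvw.le
  have hdefect : ∀ {t : ℤ}, t ∈ Sset x h M N →
      1 - Int.fract (x / (t : ℝ) ^ 2) ∈ Set.Icc 0 (h / M ^ 2) := fun ht =>
    ⟨sub_nonneg.mpr (Int.fract_lt_one _).le, one_sub_fract_le_div_sq hM hh ht⟩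
  refine ⟨_, _, ?_, secondDiff_div_sq_mem_Icc hx hM hu.2.1.le huv' hvw' hw.2.2.1,
    abs_secondDiff_le (f := fun t => 1 - Int.fract (x / t ^ 2)) huv' hvw'
      (hdefect hu) (hdefect hv) (hdefect hw)⟩
  simp only [Int.cast_floor_add_one_eq]
  exact secondDiff_add _ _

theorem secondDiff_floor_pos (hM : 0 < M) (hh : 0 ≤ h) (hx : 0 ≤ x)
    (hhN : h * N ^ 2 ≤ 4 * x * M) (hN : h * N ^ 5 < 3 * M ^ 4 * (M ^ 2 - h))
    (hu : u ∈ Sset x h M N) (hv : v ∈ Sset x h M N) (hw : w ∈ Sset x h M N) (huv : u < v)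
    (hvw : v < w) : 0 < secondDiff (fun t => ((⌊x / t ^ 2⌋ + 1 : ℤ) : ℝ)) u v w := by
  obtain ⟨F, E, hFE, ⟨hF, -⟩, hE⟩ := exists_secondDiff_floor_eq hM hh hx hu hv hw huv hvw
  rw [hFE]
  by_contra! hneg
  have hN0 : 0 < N := hM.trans (hw.2.1.trans_le hw.2.2.1)
  have hhM : h ≤ M ^ 2 := by nlinarith [pow_pos hN0 5, pow_pos hM 4]
  have hvu := two_le_sub hu hv huv
  have hwu : 0 < (w : ℝ) - u := by linarith [two_le_sub hv hw hvw]
  have hgap := sq_mul_sub_le hM hhM hx hv hw hvw (floor_lt_floor hM hh hx hhN hv hw hvw)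
  have hle : 3 * x * (((v : ℝ) - u) * (w - v) * (w - u)) / N ^ 4 ≤ h / M ^ 2 * (w - u) := by
    linarith [neg_abs_le E]
  have hkey : 3 * x * M ^ 2 * (((v : ℝ) - u) * (w - v)) ≤ h * N ^ 4 := by
    rw [div_le_iff₀ (by positivity)] at hle
    refine le_of_mul_le_mul_right ?_ hwu
    calc 3 * x * M ^ 2 * (((v : ℝ) - u) * (w - v)) * (w - u)
        = M ^ 2 * (3 * x * (((v : ℝ) - u) * (w - v) * (w - u))) := by ring
      _ ≤ M ^ 2 * (h / M ^ 2 * (w - u) * N ^ 4) := by gcongr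
      _ = h * N ^ 4 * (w - u) := by field_simp
  have hlow : 6 * M ^ 4 * (M ^ 2 - h) ≤ 2 * N * (3 * x * M ^ 2 * (((v : ℝ) - u) * (w - v))) :=
    calc 6 * M ^ 4 * (M ^ 2 - h) = 3 * M ^ 2 * (2 * (M ^ 2 * (M ^ 2 - h))) := by ring
      _ ≤ 3 * M ^ 2 * (((v : ℝ) - u) * (2 * N * x * (w - v))) := by
          gcongr
      _ = 2 * N * (3 * x * M ^ 2 * (((v : ℝ) - u) * (w - v))) := by ring
  nlinarith [mul_le_mul_of_nonneg_left hkey (by positivity : (0 : ℝ) ≤ 2 * N)]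

theorem two_mul_pow_four_le (hM : 0 < M) (hh : 0 ≤ h) (hx : 0 ≤ x)
    (hhN : h * N ^ 2 ≤ 4 * x * M) (hN : h * N ^ 5 < 3 * M ^ 4 * (M ^ 2 - h))
    (hu : u ∈ Sset x h M N) (hv : v ∈ Sset x h M N) (hw : w ∈ Sset x h M N) (huv : u < v)
    (hvw : v < w) : 2 * M ^ 4 ≤ 3 / 4 * x * ((w : ℝ) - u) ^ 3 + h * M ^ 2 * (w - u) := by
  obtain ⟨D, hDeven, hD⟩ :=
    exists_even_eq_secondDiff (fun t => ⌊x / t ^ 2⌋ + 1) hu.1 hv.1 hw.1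
  have hpos := secondDiff_floor_pos hM hh hx hhN hN hu hv hw huv hvw
  rw [hD] at hpos
  have hD2 : (2 : ℝ) ≤ D := by
    obtain ⟨k, hk⟩ := hDeven
    have : (2 : ℤ) ≤ D := by have := Int.cast_pos.mp hpos; omega
    exact_mod_cast this
  obtain ⟨F, E, hFE, ⟨-, hF⟩, hE⟩ := exists_secondDiff_floor_eq hM hh hx hu hv hw huv hvw
  rw [hD] at hFE
  have hamgm : 4 * (((v : ℝ) - u) * (w - v)) ≤ ((w : ℝ) - u) ^ 2 := by
    nlinarith [sq_nonneg ((w : ℝ) + u - 2 * v)]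
  have hwu : 0 ≤ (w : ℝ) - u := by linarith [two_le_sub hu hw (huv.trans hvw)]
  have hsum : 2 ≤ 3 * x * (((v : ℝ) - u) * (w - v) * (w - u)) / M ^ 4 + h / M ^ 2 * (w - u) := by
    linarith [le_abs_self E]
  calc 2 * M ^ 4
      ≤ (3 * x * (((v : ℝ) - u) * (w - v) * (w - u)) / M ^ 4 + h / M ^ 2 * (w - u)) * M ^ 4 := by
        gcongr
    _ = 3 * x * (((v : ℝ) - u) * (w - v)) * (w - u) + h * M ^ 2 * (w - u) := by
        field_simp
    _ ≤ 3 * x * (((w : ℝ) - u) ^ 2 / 4) * (w - u) + h * M ^ 2 * (w - u) := by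
        gcongr; linarith
    _ = 3 / 4 * x * ((w : ℝ) - u) ^ 3 + h * M ^ 2 * (w - u) := by ring

theorem le_sub_of_lt_of_lt {l : ℝ} (hM : 0 < M) (hh : 0 < h) (hx : 0 ≤ x)
    (hhN : h * N ^ 2 ≤ 4 * x * M) (hN : h * N ^ 5 < 3 * M ^ 4 * (M ^ 2 - h))
    (hl : 3 / 4 * x * l ^ 3 + h * M ^ 2 * l ≤ 2 * M ^ 4)
    (hu : u ∈ Sset x h M N) (hv : v ∈ Sset x h M N) (hw : w ∈ Sset x h M N) (huv : u < v)
    (hvw : v < w) : l ≤ w - u := by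
  have hbound := two_mul_pow_four_le hM hh.le hx hhN hN hu hv hw huv hvw
  have hwu : 0 ≤ (w : ℝ) - u := by linarith [two_le_sub hu hw (huv.trans hvw)]
  by_contra! hlt
  have h3 : ((w : ℝ) - u) ^ 3 ≤ l ^ 3 := pow_le_pow_left₀ hwu hlt.le 3
  have h1 : h * M ^ 2 * ((w : ℝ) - u) < h * M ^ 2 * l := by gcongr
  nlinarith [mul_le_mul_of_nonneg_left h3 (by positivity : (0 : ℝ) ≤ 3 / 4 * x)]

end Sset

theorem Real.rpow_one_div_three_pow_three {x : ℝ} (hx : 0 ≤ x) : (x ^ ((1 : ℝ) / 3)) ^ 3 = x := by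
  rw [one_div]; exact_mod_cast Real.rpow_inv_natCast_pow hx (n := 3) (by norm_num)

theorem ten_pow_seventeen_le_exp_forty_one : (10 : ℝ) ^ 17 ≤ Real.exp 41 :=
  calc (10 : ℝ) ^ 17 ≤ 2.7182818283 ^ 41 := by norm_num
    _ ≤ Real.exp 1 ^ 41 := by gcongr; exact Real.exp_one_gt_d9.le
    _ = Real.exp 41 := by rw [← Real.exp_nat_mul]; norm_num

section Numerics

variable {x h M lam A B : ℝ}

theorem mul_sq_le_four_mul (hA : A ^ 3 = x) (hx : 8 ≤ x) (hh : 0 ≤ h) (hhA : h ≤ 2 * A)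
    (hM : 0 < M) (hMx : M ^ 2 ≤ 2 * x) (hlam : 0 ≤ lam) (hlam' : lam ≤ 1.2) :
    h * (lam * M) ^ 2 ≤ 4 * x * M := by
  have hA2 : 2 ≤ A := by nlinarith [sq_nonneg (A + 1)]
  have hlam4 : lam ^ 4 ≤ 2.0736 := by
    calc lam ^ 4 ≤ 1.2 ^ 4 := by gcongr
      _ = 2.0736 := by norm_num
  have hsq : (h * lam ^ 2 * M) ^ 2 ≤ (4 * x) ^ 2 := by
    calc (h * lam ^ 2 * M) ^ 2 = h ^ 2 * lam ^ 4 * M ^ 2 := by ring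
      _ ≤ (2 * A) ^ 2 * 2.0736 * (2 * A ^ 3) := by rw [← hA] at hMx; gcongr
      _ ≤ (4 * x) ^ 2 := by rw [← hA]; nlinarith [pow_pos (by linarith : (0 : ℝ) < A) 5]
  have := (pow_le_pow_iff_left₀ (by positivity) (by positivity) two_ne_zero).mp hsq
  nlinarith

theorem mul_pow_five_lt (hh : 1 ≤ h) (hhM : 1.5 * h ≤ M) (hlam : 0 ≤ lam) (hlam' : lam ≤ 1.2) :
    h * (lam * M) ^ 5 < 3 * M ^ 4 * (M ^ 2 - h) := by
  have hM : 1.5 ≤ M := by linarith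
  have hlam5 : lam ^ 5 ≤ 2.48832 := by
    calc lam ^ 5 ≤ 1.2 ^ 5 := by gcongr
      _ = 2.48832 := by norm_num
  have hhM' : h ≤ 2 / 3 * M := by linarith
  have hM4 : 0 < M ^ 4 := by positivity
  calc h * (lam * M) ^ 5 = M ^ 4 * (lam ^ 5 * (h * M)) := by ring
    _ ≤ M ^ 4 * (2.48832 * (2 / 3 * M * M)) := by gcongr
    _ < M ^ 4 * (3 * (M ^ 2 - 2 / 3 * M)) := mul_lt_mul_of_pos_left (by nlinarith) hM4
    _ ≤ 3 * M ^ 4 * (M ^ 2 - h) := by nlinarith [mul_le_mul_of_nonneg_left hhM' hM4.le]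

/-- `1.4430` is chosen so that `3/4 * (2/1.4430)³ < 2`; the room left absorbs the `h M² l` term. -/
theorem cubic_le_two_mul_pow_four (hA : A ^ 3 = x) (hB : B ^ 3 = M) (hA0 : 0 < A) (hB0 : 0 < B)
    (hxM : 10 ^ 18 ≤ x * M) (hh : 0 ≤ h) (hhA : h ≤ 2 * A) (hhM : 1.5 * h ≤ M) :
    3 / 4 * x * (2 / 1.4430 * B ^ 4 / A) ^ 3 + h * M ^ 2 * (2 / 1.4430 * B ^ 4 / A) ≤
      2 * M ^ 4 := by
  set c : ℝ := 2 / 1.4430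
  have hAB : 10 ^ 6 ≤ A * B := by
    refine le_of_pow_le_pow_left₀ (n := 3) (by norm_num) (by positivity) ?_
    rw [mul_pow, hA, hB]; linarith
  have hhsq : h ^ 2 ≤ 4 / 3 * A * B ^ 3 := by
    rw [hB]; nlinarith
  have hhc : h * c ≤ 0.003 * A * B ^ 2 := by
    refine le_of_pow_le_pow_left₀ (n := 2) (by norm_num) (by positivity) ?_
    calc (h * c) ^ 2 = c ^ 2 * h ^ 2 := by ring
      _ ≤ c ^ 2 * (4 / 3 * A * B ^ 3) := by gcongr
      _ ≤ 0.003 ^ 2 * (A * B) * (A * B ^ 3) := by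
          have : c ^ 2 * (4 / 3) ≤ 0.003 ^ 2 * 10 ^ 6 := by norm_num [c]
          nlinarith [mul_pos hA0 (pow_pos hB0 3)]
      _ = (0.003 * A * B ^ 2) ^ 2 := by ring
  rw [← hA, ← hB]
  calc 3 / 4 * A ^ 3 * (c * B ^ 4 / A) ^ 3 + h * (B ^ 3) ^ 2 * (c * B ^ 4 / A)
      = 3 / 4 * c ^ 3 * B ^ 12 + h * c * B ^ 10 / A := by field_simp
    _ ≤ 3 / 4 * c ^ 3 * B ^ 12 + 0.003 * A * B ^ 2 * B ^ 10 / A := by gcongr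
    _ = (3 / 4 * c ^ 3 + 0.003) * B ^ 12 := by field_simp
    _ ≤ 2 * (B ^ 3) ^ 4 := by
        rw [← pow_mul]; gcongr; norm_num [c]

end Numerics

/-- Corollary 3: bound on the cardinality of `S(M)` via triple spacing. -/
theorem card_Sset_triple (x h lam m H M : ℝ)
    (hx : Real.exp 41 ≤ x) (hh1 : (1000 : ℝ) ≤ h) (hh2 : h ≤ 2 * x ^ ((1 : ℝ) / 3))
    (hlam1 : 1 < lam) (hlam2 : lam ≤ 1.2) (hm : (1.5 : ℝ) ≤ m)
    (hH : m * h = H) (hHM : H ≤ M) (hM : M ≤ Real.sqrt (2 * x)) :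
    ((Sset x h M (lam * M)).ncard : ℝ) ≤
      1.4430 * (lam - 1) * x ^ ((1 : ℝ) / 3) * M ^ (-(1 : ℝ) / 3) + 2 := by
  have hx17 := ten_pow_seventeen_le_exp_forty_one.trans hx
  have hhM : 1.5 * h ≤ M := by nlinarith
  have hM0 : 0 < M := by linarith
  have hMx : M ^ 2 ≤ 2 * x := (Real.le_sqrt hM0.le (by positivity)).mp hM
  set A := x ^ ((1 : ℝ) / 3)
  set B := M ^ ((1 : ℝ) / 3)
  have hA : A ^ 3 = x := Real.rpow_one_div_three_pow_three (by positivity)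
  have hB : B ^ 3 = M := Real.rpow_one_div_three_pow_three hM0.le
  have hA0 : 0 < A := by positivity
  have hB0 : 0 < B := by positivity
  have hl : 0 < 2 / 1.4430 * B ^ 4 / A := by positivity
  have hcount := Set.ncard_le_of_forall_lt_lt_le_sub hl (N := lam * M) (by nlinarith)
    (fun t ht => ⟨ht.2.1, ht.2.2.1⟩) fun u hu v hv w hw huv hvw =>
      Sset.le_sub_of_lt_of_lt hM0 (by linarith) (by positivity)
        (mul_sq_le_four_mul hA (by linarith) (by linarith) hh2 hM0 hMx (by linarith) hlam2)
        (mul_pow_five_lt (by linarith) hhM (by linarith) hlam2)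
        (cubic_le_two_mul_pow_four hA hB hA0 hB0 (by nlinarith) (by linarith) hh2 hhM)
        hu hv hw huv hvw
  have hMinv : M ^ (-(1 : ℝ) / 3) = B⁻¹ := by rw [neg_div, Real.rpow_neg hM0.le]
  rw [hMinv]
  convert hcount using 1
  rw [← hB]; field_simp
end

section
/- Let x ≥ 1 and h ≥ 1 be reals and let J ≥ 2 be a real number. Then the number N(x,h) of integers n with x < n ≤ x + h that are not squarefree satisfies N(x,h) ≤ h·(1 − ∏_{p ≤ J} (1 − 1/p²)) + 2^{π(J)} + Σ_{p > J} (⌊(x+h)/p²⌋ − ⌊x/p²⌋), where the product is over primes p ≤ J, the sum is over primes p > J (only finitely many terms are nonzero, namely those with p² ≤ x + h), and π(J) denotes the number of primes at most J. -/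
/-!
A non-squarefree `n` is divisible by `p²` for some prime `p`. The `n ∈ (x, x + h]` with such a
`p ≤ J` are counted by Legendre's sieve, i.e. inclusion–exclusion over the `2^π(J)` sets `t` of
primes `p ≤ J`: the interval contains `h / d_t²` multiples of `d_t = ∏_{p ∈ t} p` up to an error
of less than `1`, and the main terms add up to `h (1 - ∏_{p ≤ J} (1 - 1/p²))`. For the primes
`p > J` a union bound suffices, the interval containing `⌊(x + h)/p²⌋ - ⌊x/p²⌋` multiples of `p²`.
-/

open Finset Function

theorem Finset.card_filter_exists_le_sum_card_filter {ι α : Type*} (I : Finset α) (Q : Finset ι)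
    (P : ι → α → Prop) [∀ i, DecidablePred (P i)] :
    #{a ∈ I | ∃ i ∈ Q, P i a} ≤ ∑ i ∈ Q, #{a ∈ I | P i a} := by
  classical
  calc #{a ∈ I | ∃ i ∈ Q, P i a} = #(Q.biUnion fun i => {a ∈ I | P i a}) := by
        congr 1; ext a; simp only [mem_filter, mem_biUnion]; tauto
    _ ≤ _ := card_biUnion_le

namespace Nat

theorem le_of_pow_dvd_of_mem_Ioc {p k n M N : ℕ} (hk : k ≠ 0) (hn : n ∈ Ioc M N)
    (hpn : p ^ k ∣ n) : p ≤ N :=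
  (le_self_pow hk p).trans ((le_of_dvd (zero_lt_of_lt (mem_Ioc.1 hn).1) hpn).trans (mem_Ioc.1 hn).2)

theorem card_Ioc_filter_dvd (M N m : ℕ) : #{n ∈ Ioc M N | m ∣ n} = N / m - M / m := by
  rcases le_total M N with hMN | hNM
  · have : {n ∈ Ioc M N | m ∣ n} = {n ∈ Ioc 0 N | m ∣ n} \ {n ∈ Ioc 0 M | m ∣ n} := by
      ext n; simp only [mem_sdiff, mem_filter, mem_Ioc]; omega
    rw [this, card_sdiff_of_subset (filter_subset_filter _ (Ioc_subset_Ioc_right hMN)),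
      Ioc_filter_dvd_card_eq_div, Ioc_filter_dvd_card_eq_div]
  · rw [Ioc_eq_empty_of_le hNM, filter_empty, card_empty,
      Nat.sub_eq_zero_of_le (Nat.div_le_div_right hNM)]

variable {ι : Type*} {s : Finset ι} {f : ι → ℕ}

theorem prod_dvd_iff_of_pairwise_coprime (hf : (s : Set ι).Pairwise (Coprime on f)) {n : ℕ} :
    ∏ i ∈ s, f i ∣ n ↔ ∀ i ∈ s, f i ∣ n := by
  refine ⟨fun h i hi => (dvd_prod_of_mem f hi).trans h, fun h => ?_⟩
  have := Finset.prod_dvd_of_coprime (s := fun i => (f i : ℤ)) (z := (n : ℤ))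
    (fun i hi j hj hij => Nat.isCoprime_iff_coprime.2 (hf hi hj hij))
    (fun i hi => Int.natCast_dvd_natCast.2 (h i hi))
  exact_mod_cast this

theorem cast_card_filter_forall_not_dvd {R : Type*} [CommRing R]
    (hf : (s : Set ι).Pairwise (Coprime on f)) (I : Finset ℕ) :
    (#{n ∈ I | ∀ i ∈ s, ¬ f i ∣ n} : R) =
      ∑ t ∈ s.powerset, (-1 : R) ^ #t * #{n ∈ I | ∏ i ∈ t, f i ∣ n} := by
  classical
  have hindicator (n : ℕ) : (if ∀ i ∈ s, ¬ f i ∣ n then 1 else 0 : R) =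
      ∑ t ∈ s.powerset, (-1) ^ #t * if ∏ i ∈ t, f i ∣ n then 1 else 0 := by
    have hnot (i : ι) : (if ¬ f i ∣ n then 1 else 0 : R) = 1 - if f i ∣ n then 1 else 0 := by
      split_ifs <;> simp
    simp only [← prod_boole, hnot, prod_sub, prod_const_one, mul_one]
    refine sum_congr rfl fun t ht => ?_
    simp only [prod_boole,
      prod_dvd_iff_of_pairwise_coprime (hf.mono (coe_subset.2 (mem_powerset.1 ht)))]
  simp only [natCast_card_filter, hindicator, mul_sum]
  exact sum_comm

end Nat

section FloorRing

variable {K : Type*} [Field K] [LinearOrder K] [IsStrictOrderedRing K] [FloorRing K]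

theorem Int.abs_floor_sub_floor_sub_lt_one (u v : K) : |(⌊u⌋ - ⌊v⌋ : K) - (u - v)| < 1 := by
  rw [abs_sub_lt_iff]
  constructor <;>
    linarith [Int.floor_le u, Int.lt_floor_add_one u, Int.floor_le v, Int.lt_floor_add_one v]

theorem Nat.coe_filter_Ioc_floor_floor {a : K} (ha : 0 ≤ a) (b : K) (P : ℕ → Prop)
    [DecidablePred P] :
    (({n ∈ Ioc ⌊a⌋₊ ⌊b⌋₊ | P n} : Finset ℕ) : Set ℕ) = {n : ℕ | a < n ∧ (n : K) ≤ b ∧ P n} := by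
  ext n
  simp only [coe_filter, mem_Ioc, Set.mem_ofPred_eq, Nat.floor_lt ha, ← and_assoc]
  refine and_congr_left fun _ => and_congr_right fun han => ?_
  exact Nat.le_floor_iff' (Nat.cast_pos.1 (ha.trans_lt han)).ne'

theorem Nat.filter_not_squarefree_subset_union (J : K) (M N : ℕ) :
    {n ∈ Ioc M N | ¬ Squarefree n} ⊆
      {n ∈ Ioc M N | ∃ p ∈ (Iic ⌊J⌋₊).filter Nat.Prime, p ^ 2 ∣ n} ∪
        {n ∈ Ioc M N | ∃ p ∈ (range (N + 1)).filter fun p : ℕ => p.Prime ∧ J < p, p ^ 2 ∣ n} := by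
  intro n hn
  obtain ⟨hnI, hn⟩ := mem_filter.1 hn
  obtain ⟨p, hp, hpn⟩ : ∃ p, p.Prime ∧ p ^ 2 ∣ n := by
    simpa [Nat.squarefree_iff_prime_squarefree, sq] using hn
  rcases le_or_gt p ⌊J⌋₊ with hpJ | hpJ
  · exact mem_union_left _ (mem_filter.2 ⟨hnI, p, mem_filter.2 ⟨mem_Iic.2 hpJ, hp⟩, hpn⟩)
  · refine mem_union_right _ (mem_filter.2 ⟨hnI, p, mem_filter.2 ⟨?_, hp, ?_⟩, hpn⟩)
    · exact mem_range.2 (Nat.lt_succ_of_le (Nat.le_of_pow_dvd_of_mem_Ioc two_ne_zero hnI hpn))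
    · exact (Nat.floor_lt' hp.ne_zero).1 hpJ

theorem Nat.cast_card_Ioc_floor_filter_dvd {a b : K} (ha : 0 ≤ a) (hab : a ≤ b) (m : ℕ) :
    (#{n ∈ Ioc ⌊a⌋₊ ⌊b⌋₊ | m ∣ n} : K) = ⌊b / m⌋ - ⌊a / m⌋ := by
  have hfloor {y : K} (hy : 0 ≤ y) : ((⌊y⌋₊ / m : ℕ) : K) = ⌊y / m⌋ := by
    rw [← Nat.floor_div_natCast, natCast_floor_eq_intCast_floor (by positivity)]
  rw [Nat.card_Ioc_filter_dvd, Nat.cast_sub (Nat.div_le_div_right (Nat.floor_mono hab)),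
    hfloor ha, hfloor (ha.trans hab)]

variable {ι : Type*} {s : Finset ι} {f : ι → ℕ}

theorem Nat.cast_card_filter_exists_dvd_le (hf : (s : Set ι).Pairwise (Nat.Coprime on f))
    {x h : K} (hx : 0 ≤ x) (hh : 0 ≤ h) :
    (#{n ∈ Ioc ⌊x⌋₊ ⌊x + h⌋₊ | ∃ i ∈ s, f i ∣ n} : K) ≤
      h * (1 - ∏ i ∈ s, (1 - 1 / (f i : K))) + 2 ^ #s := by
  classical
  set I := Ioc ⌊x⌋₊ ⌊x + h⌋₊
  set e : Finset ι → K := fun t => #{n ∈ I | ∏ i ∈ t, f i ∣ n} - h * ∏ i ∈ t, 1 / (f i : K)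
  have he (t : Finset ι) : |e t| < 1 := by
    convert Int.abs_floor_sub_floor_sub_lt_one
      ((x + h) / ∏ i ∈ t, (f i : K)) (x / ∏ i ∈ t, (f i : K)) using 2
    simp only [e, I]
    rw [Nat.cast_card_Ioc_floor_filter_dvd hx (le_add_of_nonneg_right hh), Nat.cast_prod,
      ← sub_div, add_sub_cancel_left]
    simp only [one_div, prod_inv_distrib, ← div_eq_mul_inv]
  have hcomplement : (#{n ∈ I | ∃ i ∈ s, f i ∣ n} : K) =
      #{n ∈ I | ∏ i ∈ (∅ : Finset ι), f i ∣ n} - #{n ∈ I | ∀ i ∈ s, ¬ f i ∣ n} := by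
    rw [eq_sub_iff_add_eq, prod_empty, filter_true_of_mem fun n _ => one_dvd n]
    have := card_filter_add_card_filter_not (s := I) fun n => ∃ i ∈ s, f i ∣ n
    simp only [not_exists, not_and] at this
    exact_mod_cast this
  have hprod : ∏ i ∈ s, (1 - 1 / (f i : K)) =
      ∑ t ∈ s.powerset, (-1) ^ #t * ∏ i ∈ t, 1 / (f i : K) := by
    simp [prod_sub]
  have key : (#{n ∈ I | ∃ i ∈ s, f i ∣ n} : K) - h * (1 - ∏ i ∈ s, (1 - 1 / (f i : K))) =
      -∑ t ∈ s.powerset.erase ∅, (-1) ^ #t * e t := by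
    rw [sum_erase_eq_sub (empty_mem_powerset s), hcomplement,
      Nat.cast_card_filter_forall_not_dvd hf, hprod]
    simp only [e, mul_sub, sum_sub_distrib, mul_sum, card_empty, pow_zero, prod_empty, one_mul,
      mul_one, mul_left_comm h]
    ring
  calc (#{n ∈ I | ∃ i ∈ s, f i ∣ n} : K)
      = h * (1 - ∏ i ∈ s, (1 - 1 / (f i : K))) +
          ∑ t ∈ s.powerset.erase ∅, -((-1) ^ #t * e t) := by
        rw [sum_neg_distrib]; linarith
    _ ≤ h * (1 - ∏ i ∈ s, (1 - 1 / (f i : K))) + ∑ t ∈ s.powerset.erase ∅, 1 := by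
        gcongr with t
        refine (neg_le_abs _).trans ?_
        simpa [abs_mul] using (he t).le
    _ ≤ h * (1 - ∏ i ∈ s, (1 - 1 / (f i : K))) + 2 ^ #s := by
        gcongr
        rw [sum_const, nsmul_one]
        exact_mod_cast card_erase_le.trans (card_powerset s).le

end FloorRing

theorem Nat.tsum_ite_floor_sub_floor_eq_sum_card {a b : ℝ} (ha : 0 ≤ a) (hab : a ≤ b) {k : ℕ}
    (hk : k ≠ 0) (P : ℕ → Prop) [DecidablePred P] :
    ∑' p : ℕ, (if P p then (⌊b / (p : ℝ) ^ k⌋ - ⌊a / (p : ℝ) ^ k⌋ : ℝ) else 0) =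
      ∑ p ∈ {p ∈ range (⌊b⌋₊ + 1) | P p}, (#{n ∈ Ioc ⌊a⌋₊ ⌊b⌋₊ | p ^ k ∣ n} : ℝ) := by
  have hvanish (p : ℕ) (hp : p ∉ range (⌊b⌋₊ + 1)) : #{n ∈ Ioc ⌊a⌋₊ ⌊b⌋₊ | p ^ k ∣ n} = 0 :=
    Finset.card_eq_zero.2 <| filter_eq_empty_iff.2 fun n hn hpn => hp <| mem_range.2 <|
      Nat.lt_succ_of_le (Nat.le_of_pow_dvd_of_mem_Ioc hk hn hpn)
  simp_rw [← Nat.cast_pow, ← Nat.cast_card_Ioc_floor_filter_dvd ha hab]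
  rw [tsum_eq_sum (s := range (⌊b⌋₊ + 1)) fun p hp => by simp [hvanish p hp], sum_filter]

theorem count_nonsquarefree_le_general (x h J : ℝ) (hx : 1 ≤ x) (hh : 1 ≤ h) :
    (({n : ℕ | x < (n : ℝ) ∧ (n : ℝ) ≤ x + h ∧ ¬ Squarefree n}.ncard : ℝ)) ≤
      h * (1 - ∏ p ∈ (Finset.Iic ⌊J⌋₊).filter Nat.Prime, (1 - 1 / (p : ℝ) ^ 2)) +
        2 ^ ((Finset.Iic ⌊J⌋₊).filter Nat.Prime).card +
        ∑' p : ℕ, (if p.Prime ∧ J < (p : ℝ) then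
          ((⌊(x + h) / (p : ℝ) ^ 2⌋ : ℝ) - (⌊x / (p : ℝ) ^ 2⌋ : ℝ)) else 0) := by
  have hx0 : 0 ≤ x := by linarith
  set I := Ioc ⌊x⌋₊ ⌊x + h⌋₊
  set s := (Iic ⌊J⌋₊).filter Nat.Prime
  set Q := (range (⌊x + h⌋₊ + 1)).filter fun p : ℕ => p.Prime ∧ J < p
  have hsmall : (#{n ∈ I | ∃ p ∈ s, p ^ 2 ∣ n} : ℝ) ≤
      h * (1 - ∏ p ∈ s, (1 - 1 / (p : ℝ) ^ 2)) + 2 ^ #s := by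
    have hcoprime : (s : Set ℕ).Pairwise (Nat.Coprime on (· ^ 2)) := fun p hp q hq hpq =>
      Nat.Coprime.pow 2 2 ((Nat.coprime_primes (mem_filter.1 hp).2 (mem_filter.1 hq).2).2 hpq)
    simpa only [Nat.cast_pow] using Nat.cast_card_filter_exists_dvd_le hcoprime hx0 (by linarith)
  have hlarge : (#{n ∈ I | ∃ p ∈ Q, p ^ 2 ∣ n} : ℝ) ≤ ∑ p ∈ Q, (#{n ∈ I | p ^ 2 ∣ n} : ℝ) :=
    mod_cast card_filter_exists_le_sum_card_filter I Q fun p n => p ^ 2 ∣ n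
  rw [← Nat.coe_filter_Ioc_floor_floor hx0, Set.ncard_coe_finset,
    Nat.tsum_ite_floor_sub_floor_eq_sum_card hx0 (by linarith) two_ne_zero]
  calc (#{n ∈ I | ¬ Squarefree n} : ℝ)
      ≤ #{n ∈ I | ∃ p ∈ s, p ^ 2 ∣ n} + #{n ∈ I | ∃ p ∈ Q, p ^ 2 ∣ n} := by
        exact_mod_cast (card_le_card (Nat.filter_not_squarefree_subset_union J _ _)).trans
          (card_union_le _ _)
    _ ≤ _ := by linarith

/-- Inequality (2.1): sieving the interval `(x, x+h]` by squares of primes. The number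
of non-squarefree integers in `(x, x+h]` is at most
`h·(1 − ∏_{p ≤ J}(1 − 1/p²)) + 2^{π(J)} + ∑_{p > J}(⌊(x+h)/p²⌋ − ⌊x/p²⌋)`.
The sum over primes `p > J` has only finitely many nonzero terms, so it is written as
a `tsum`. -/
theorem count_nonsquarefree_le (x h J : ℝ) (hx : 1 ≤ x) (hh : 1 ≤ h) (hJ : 2 ≤ J) :
    (({n : ℕ | x < (n : ℝ) ∧ (n : ℝ) ≤ x + h ∧ ¬ Squarefree n}.ncard : ℝ)) ≤
      h * (1 - ∏ p ∈ (Finset.Iic ⌊J⌋₊).filter Nat.Prime, (1 - 1 / (p : ℝ) ^ 2)) +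
        2 ^ ((Finset.Iic ⌊J⌋₊).filter Nat.Prime).card +
        ∑' p : ℕ, (if p.Prime ∧ J < (p : ℝ) then
          ((⌊(x + h) / (p : ℝ) ^ 2⌋ : ℝ) - (⌊x / (p : ℝ) ^ 2⌋ : ℝ)) else 0) :=
  count_nonsquarefree_le_general x h J hx hh
end
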